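/- arXiv:0909.0551 — 15 statements merged into one kernel-verified Lean document; each statement's English description precedes it below -/
import Mathlib

section
/- Let K be a unital, not necessarily associative, real algebra with conjugation satisfying the reality condition. Then the associator changes sign when any one of its entries is conjugated: for all a, b, c ∈ K, [star a, b, c] = −[a, b, c], [a, star b, c] = −[a, b, c], and [a, b, star c] = −[a, b, c]. -/
/-- The associator changes sign when any one of its entries is conjugated. -/
theorem associator_conj_neg {K : Type*} [NonAssocRing K] [Module ℝ K]
    [SMulCommClass ℝ K K] [IsScalarTower ℝ K K]
    (star : K →ₗ[ℝ] K)
    (star_star : ∀ a : K, star (star a) = a)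
    (star_mul : ∀ a b : K, star (a * b) = star b * star a)
    (real_cond : ∀ a : K, ∃ r : ℝ, a + star a = r • (1 : K))
    (a b c : K) :
    (star a * b) * c - star a * (b * c) = -((a * b) * c - a * (b * c)) ∧
    (a * star b) * c - a * (star b * c) = -((a * b) * c - a * (b * c)) ∧
    (a * b) * star c - a * (b * star c) = -((a * b) * c - a * (b * c)) := by
  refine ⟨?_, ?_, ?_⟩
  · obtain ⟨r, hr⟩ := real_cond a
    have h : star a = r • (1:K) - a := by rw [← hr]; abel
    rw [h]
    simp only [sub_mul, mul_sub, smul_mul_assoc, mul_smul_comm, one_mul, mul_one]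
    abel
  · obtain ⟨r, hr⟩ := real_cond b
    have h : star b = r • (1:K) - b := by rw [← hr]; abel
    rw [h]
    simp only [sub_mul, mul_sub, smul_mul_assoc, mul_smul_comm, one_mul, mul_one]
    abel
  · obtain ⟨r, hr⟩ := real_cond c
    have h : star c = r • (1:K) - c := by rw [← hr]; abel
    rw [h]
    simp only [sub_mul, mul_sub, smul_mul_assoc, mul_smul_comm, one_mul, mul_one]
    abel
end

section
/- Let K be a unital, not necessarily associative, real algebra with conjugation satisfying the reality condition, and suppose K is alternative. Then the associator is purely imaginary: for all a, b, c ∈ K, star [a, b, c] = −[a, b, c]. -/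
/-- In an alternative real algebra with conjugation satisfying the reality
condition, the associator is purely imaginary. -/
theorem associator_purely_imaginary {K : Type*} [NonAssocRing K] [Module ℝ K]
    [SMulCommClass ℝ K K] [IsScalarTower ℝ K K]
    (star : K →ₗ[ℝ] K)
    (star_star : ∀ a : K, star (star a) = a)
    (star_mul : ∀ a b : K, star (a * b) = star b * star a)
    (real_cond : ∀ a : K, ∃ r : ℝ, a + star a = r • (1 : K))
    (alt_left : ∀ a b : K, (a * a) * b = a * (a * b))
    (alt_right : ∀ a b : K, (a * b) * b = a * (b * b))
    (a b c : K) :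
    star ((a * b) * c - a * (b * c)) = -((a * b) * c - a * (b * c)) := by
  obtain ⟨r1, h1⟩ := real_cond a
  obtain ⟨r2, h2⟩ := real_cond b
  obtain ⟨r3, h3⟩ := real_cond c
  set A : K → K → K → K := fun x y z => (x * y) * z - x * (y * z) with hA
  have swap12 : ∀ x y z : K, A y x z = - A x y z := by
    intro x y z
    have h := alt_left (x + y) z
    simp only [add_mul, mul_add] at h
    rw [alt_left x z, alt_left y z] at h
    simp only [hA]
    linear_combination (norm := abel) h
  have swap23 : ∀ x y z : K, A x z y = - A x y z := by
    intro x y z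
    have h := alt_right x (y + z)
    simp only [add_mul, mul_add] at h
    rw [alt_right x y, alt_right x z] at h
    simp only [hA]
    linear_combination (norm := abel) h
  have sub1 : ∀ x x' y z : K, A (x - x') y z = A x y z - A x' y z := by
    intro x x' y z; simp only [hA, sub_mul, mul_sub]; abel
  have sub2 : ∀ x y y' z : K, A x (y - y') z = A x y z - A x y' z := by
    intro x y y' z; simp only [hA, sub_mul, mul_sub]; abel
  have sub3 : ∀ x y z z' : K, A x y (z - z') = A x y z - A x y z' := by
    intro x y z z'; simp only [hA, sub_mul, mul_sub]; abel
  have one1 : ∀ (r : ℝ) (y z : K), A (r • 1) y z = 0 := by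
    intro r y z; simp [hA, smul_mul_assoc]
  have one2 : ∀ (r : ℝ) (y z : K), A y (r • 1) z = 0 := by
    intro r y z; simp [hA, smul_mul_assoc, mul_smul_comm]
  have one3 : ∀ (r : ℝ) (y z : K), A y z (r • 1) = 0 := by
    intro r y z; simp [hA, mul_smul_comm]
  have ha' : star a = r1 • (1 : K) - a := by rw [eq_sub_iff_add_eq, add_comm]; exact h1
  have hb' : star b = r2 • (1 : K) - b := by rw [eq_sub_iff_add_eq, add_comm]; exact h2
  have hc' : star c = r3 • (1 : K) - c := by rw [eq_sub_iff_add_eq, add_comm]; exact h3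
  have key : star ((a * b) * c - a * (b * c)) = - A (star c) (star b) (star a) := by
    rw [map_sub, star_mul, star_mul, star_mul, star_mul]
    simp only [hA, neg_sub]
  rw [key, hc', hb', ha', sub1, one1, sub2, one2, sub3, one3]
  have e2 : A c b a = - A a b c := by
    rw [swap12 b c a, swap23 b a c, swap12 a b c]; abel
  simp only [hA] at e2 ⊢
  rw [e2]; abel
end

section
/- Let K be a unital, not necessarily associative, real algebra with conjugation satisfying the reality condition. Then the real part of a product is symmetric: for all a, b ∈ K, a * b + star (a * b) = b * a + star (b * a). -/
/-- The real part of a product is symmetric: `Re(ab) = Re(ba)`,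
expressed as `ab + star (ab) = ba + star (ba)`. -/
theorem re_mul_comm {K : Type*} [NonAssocRing K] [Module ℝ K]
    [SMulCommClass ℝ K K] [IsScalarTower ℝ K K]
    (star : K →ₗ[ℝ] K)
    (star_star : ∀ a : K, star (star a) = a)
    (star_mul : ∀ a b : K, star (a * b) = star b * star a)
    (real_cond : ∀ a : K, ∃ r : ℝ, a + star a = r • (1 : K))
    (a b : K) :
    a * b + star (a * b) = b * a + star (b * a) := by
  obtain ⟨r, hr⟩ := real_cond a
  obtain ⟨s, hs⟩ := real_cond b
  have ha : star a = r • (1 : K) - a := by rw [eq_sub_iff_add_eq']; exact hr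
  have hb : star b = s • (1 : K) - b := by rw [eq_sub_iff_add_eq']; exact hs
  rw [star_mul, star_mul, ha, hb]
  simp only [sub_mul, mul_sub, smul_mul_assoc, mul_smul_comm, smul_smul,
    one_mul, mul_one, mul_comm r s]
  module
end

section
/- Let K be a unital, not necessarily associative, real algebra with conjugation satisfying the reality condition, and suppose K is alternative. Then for all a, b, c ∈ K the real part Re((ab)c) equals Re(a(bc)) and is invariant under cyclic permutations: (a*b)*c + star((a*b)*c) = a*(b*c) + star(a*(b*c)), and this element also equals (b*c)*a + star((b*c)*a) and (c*a)*b + star((c*a)*b). -/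
/-- In an alternative real algebra with conjugation satisfying the reality
condition, `Re((ab)c) = Re(a(bc))` and this quantity is cyclically invariant. -/
theorem re_mul_assoc_cyclic {K : Type*} [NonAssocRing K] [Module ℝ K]
    [SMulCommClass ℝ K K] [IsScalarTower ℝ K K]
    (star : K →ₗ[ℝ] K)
    (star_star : ∀ a : K, star (star a) = a)
    (star_mul : ∀ a b : K, star (a * b) = star b * star a)
    (real_cond : ∀ a : K, ∃ r : ℝ, a + star a = r • (1 : K))
    (alt_left : ∀ a b : K, (a * a) * b = a * (a * b))
    (alt_right : ∀ a b : K, (a * b) * b = a * (b * b))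
    (a b c : K) :
    (a * b) * c + star ((a * b) * c) = a * (b * c) + star (a * (b * c)) ∧
    (a * b) * c + star ((a * b) * c) = (b * c) * a + star ((b * c) * a) ∧
    (a * b) * c + star ((a * b) * c) = (c * a) * b + star ((c * a) * b) := by
  -- the associator
  set A : K → K → K → K := fun x y z => (x*y)*z - x*(y*z) with hA
  have hswap12 : ∀ x y z : K, A x y z = - A y x z := by
    intro x y z
    have h := alt_left (x + y) z
    simp only [add_mul, mul_add] at h
    rw [alt_left x z, alt_left y z] at h
    simp only [hA]
    linear_combination (norm := abel) h
  have hswap23 : ∀ x y z : K, A x y z = - A x z y := by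
    intro x y z
    have h := alt_right x (y + z)
    simp only [add_mul, mul_add] at h
    rw [alt_right x y, alt_right x z] at h
    simp only [hA]
    linear_combination (norm := abel) h
  have hswap13 : ∀ x y z : K, A x y z = - A z y x := by
    intro x y z
    rw [hswap12 x y z, hswap23 y x z, hswap12 y z x]; abel
  have hsub1 : ∀ x y z w : K, A (x - y) z w = A x z w - A y z w := by
    intro x y z w; simp only [hA, sub_mul, mul_sub]; abel
  have hsub2 : ∀ x y z w : K, A x (y - z) w = A x y w - A x z w := by
    intro x y z w; simp only [hA, sub_mul, mul_sub]; abel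
  have hsub3 : ∀ x y z w : K, A x y (z - w) = A x y z - A x y w := by
    intro x y z w; simp only [hA, sub_mul, mul_sub]; abel
  have hone1 : ∀ (r : ℝ) (y z : K), A (r • (1:K)) y z = 0 := by
    intro r y z; simp [hA, smul_mul_assoc, one_mul]
  have hone2 : ∀ (r : ℝ) (y z : K), A y (r • (1:K)) z = 0 := by
    intro r y z; simp [hA, smul_mul_assoc, mul_smul_comm, one_mul, mul_one]
  have hone3 : ∀ (r : ℝ) (y z : K), A y z (r • (1:K)) = 0 := by
    intro r y z; simp [hA, smul_mul_assoc, mul_smul_comm, mul_one]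
  -- star x = r•1 - x
  have hstar : ∀ x : K, ∃ r : ℝ, star x = r • (1:K) - x := by
    intro x
    obtain ⟨r, hr⟩ := real_cond x
    exact ⟨r, by rw [← hr]; abel⟩
  -- star of associator is the reversed associator
  have hstarA : ∀ x y z : K, star (A x y z) = A z y x := by
    intro x y z
    obtain ⟨rx, hx⟩ := hstar x
    obtain ⟨ry, hy⟩ := hstar y
    obtain ⟨rz, hz⟩ := hstar z
    have h1 : star (A x y z) = - A (star z) (star y) (star x) := by
      simp only [hA, map_sub, star_mul]
      abel
    rw [h1, hx, hy, hz, hsub1, hsub2, hsub2, hsub3, hsub3, hsub3, hsub3,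
      hone1, hone2, hone3]
    simp [hone1, hone2, hone3]
  -- hence Re of the associator vanishes
  have key : ∀ x y z : K, (x*y)*z + star ((x*y)*z) = x*(y*z) + star (x*(y*z)) := by
    intro x y z
    have h0 : A x y z + star (A x y z) = 0 := by
      rw [hstarA, hswap13 z y x]; abel
    have h1 : star (A x y z) = star ((x*y)*z) - star (x*(y*z)) := by
      simp only [hA, map_sub]
    rw [h1] at h0
    simp only [hA] at h0
    linear_combination (norm := abel) h0
  -- Re(xy) = Re(yx)
  have tcomm : ∀ x y : K, x*y + star (x*y) = y*x + star (y*x) := by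
    intro x y
    obtain ⟨r, hx⟩ := hstar x
    obtain ⟨s, hy⟩ := hstar y
    rw [star_mul, star_mul, hx, hy]
    simp only [sub_mul, mul_sub, smul_mul_assoc, mul_smul_comm, one_mul, mul_one,
      smul_smul]
    module
  refine ⟨key a b c, ?_, ?_⟩
  · rw [key a b c]; exact tcomm a (b*c)
  · rw [show (a*b)*c + star ((a*b)*c) = c*(a*b) + star (c*(a*b)) from tcomm (a*b) c,
      ← key c a b]
end

section
/- Let K be a unital, not necessarily associative, real algebra with conjugation satisfying the reality condition, and suppose K is alternative. Let A be a k × ℓ matrix, B an ℓ × m matrix, and C an m × k matrix, all with entries in K. Then the real trace is well defined and cyclic: Matrix.trace((A*B)*C) + star(Matrix.trace((A*B)*C)) = Matrix.trace(A*(B*C)) + star(Matrix.trace(A*(B*C))), and this element also equals Matrix.trace((B*C)*A) + star(Matrix.trace((B*C)*A)) and Matrix.trace((C*A)*B) + star(Matrix.trace((C*A)*B)). -/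
/-- The real trace `Retr(ABC)` of a product of rectangular matrices over an
alternative real algebra with conjugation is well defined and cyclic. -/
theorem re_trace_cyclic {K : Type*} [NonAssocRing K] [Module ℝ K]
    [SMulCommClass ℝ K K] [IsScalarTower ℝ K K]
    (star : K →ₗ[ℝ] K)
    (star_star : ∀ a : K, star (star a) = a)
    (star_mul : ∀ a b : K, star (a * b) = star b * star a)
    (real_cond : ∀ a : K, ∃ r : ℝ, a + star a = r • (1 : K))
    (alt_left : ∀ a b : K, (a * a) * b = a * (a * b))
    (alt_right : ∀ a b : K, (a * b) * b = a * (b * b))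
    {k l m : Type*} [Fintype k] [Fintype l] [Fintype m]
    (A : Matrix k l K) (B : Matrix l m K) (C : Matrix m k K) :
    Matrix.trace ((A * B) * C) + star (Matrix.trace ((A * B) * C)) =
      Matrix.trace (A * (B * C)) + star (Matrix.trace (A * (B * C))) ∧
    Matrix.trace ((A * B) * C) + star (Matrix.trace ((A * B) * C)) =
      Matrix.trace ((B * C) * A) + star (Matrix.trace ((B * C) * A)) ∧
    Matrix.trace ((A * B) * C) + star (Matrix.trace ((A * B) * C)) =
      Matrix.trace ((C * A) * B) + star (Matrix.trace ((C * A) * B)) := by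
  classical
  -- the associator is alternating
  have swap12 : ∀ a b c : K, (b*a)*c - b*(a*c) = -((a*b)*c - a*(b*c)) := by
    intro a b c
    have h := alt_left (a+b) c
    simp only [add_mul, mul_add, alt_left] at h
    linear_combination (norm := module) h
  have swap23 : ∀ a b c : K, (a*c)*b - a*(c*b) = -((a*b)*c - a*(b*c)) := by
    intro a b c
    have h := alt_right a (b+c)
    simp only [add_mul, mul_add, alt_right] at h
    linear_combination (norm := module) h
  have rev : ∀ a b c : K, (c*b)*a - c*(b*a) = -((a*b)*c - a*(b*c)) := by
    intro a b c
    rw [swap23 c a b, swap12 a c b, swap23 a b c]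
    simp
  -- the "real part" functional
  set F : K →ₗ[ℝ] K := LinearMap.id + star with hFdef
  have hF : ∀ t : K, t + star t = F t := fun t => rfl
  have hcomm : ∀ a b : K, F (a*b) = F (b*a) := by
    intro a b
    obtain ⟨ra, ha⟩ := real_cond a
    obtain ⟨rb, hb⟩ := real_cond b
    have hsa : (star a : K) = ra • (1:K) - a := eq_sub_of_add_eq' ha
    have hsb : (star b : K) = rb • (1:K) - b := eq_sub_of_add_eq' hb
    rw [← hF, ← hF, star_mul, star_mul, hsa, hsb]
    simp only [sub_mul, mul_sub, smul_mul_assoc, mul_smul_comm, one_mul, mul_one, smul_smul]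
    module
  have hassoc : ∀ a b c : K, F ((a*b)*c) = F (a*(b*c)) := by
    intro a b c
    obtain ⟨ra, ha⟩ := real_cond a
    obtain ⟨rb, hb⟩ := real_cond b
    obtain ⟨rc, hc⟩ := real_cond c
    have hsa : (star a : K) = ra • (1:K) - a := eq_sub_of_add_eq' ha
    have hsb : (star b : K) = rb • (1:K) - b := eq_sub_of_add_eq' hb
    have hsc : (star c : K) = rc • (1:K) - c := eq_sub_of_add_eq' hc
    rw [← hF, ← hF, star_mul, star_mul, star_mul, star_mul, hsa, hsb, hsc]
    simp only [sub_mul, mul_sub, smul_mul_assoc, mul_smul_comm, one_mul, mul_one, smul_smul]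
    linear_combination (norm := module) rev a b c
  -- expand the traces as triple sums
  have e1 : Matrix.trace ((A*B)*C) = ∑ i, ∑ p, ∑ j, (A i j * B j p) * C p i := by
    simp [Matrix.trace, Matrix.diag, Matrix.mul_apply, Finset.sum_mul]
  have e2 : Matrix.trace (A*(B*C)) = ∑ i, ∑ j, ∑ p, A i j * (B j p * C p i) := by
    simp [Matrix.trace, Matrix.diag, Matrix.mul_apply, Finset.mul_sum]
  have e3 : Matrix.trace ((B*C)*A) = ∑ j, ∑ i, ∑ p, (B j p * C p i) * A i j := by
    simp [Matrix.trace, Matrix.diag, Matrix.mul_apply, Finset.sum_mul]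
  have e4 : Matrix.trace ((C*A)*B) = ∑ p, ∑ j, ∑ i, (C p i * A i j) * B j p := by
    simp [Matrix.trace, Matrix.diag, Matrix.mul_apply, Finset.sum_mul]
  have key1 : F (Matrix.trace ((A*B)*C)) = ∑ i, ∑ j, ∑ p, F ((A i j * B j p) * C p i) := by
    rw [e1]; simp only [map_sum]
    exact Finset.sum_congr rfl fun i _ => Finset.sum_comm
  refine ⟨?_, ?_, ?_⟩
  · rw [hF, hF, key1, e2]
    simp only [map_sum]
    exact Finset.sum_congr rfl fun i _ => Finset.sum_congr rfl fun j _ =>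
      Finset.sum_congr rfl fun p _ => hassoc _ _ _
  · rw [hF, hF, key1, e3]
    simp only [map_sum]
    rw [Finset.sum_comm]
    refine Finset.sum_congr rfl fun j _ => Finset.sum_congr rfl fun i _ =>
      Finset.sum_congr rfl fun p _ => ?_
    rw [hassoc, hcomm]
  · rw [hF, hF, key1, e4]
    simp only [map_sum]
    have : ∀ p j i, F ((C p i * A i j) * B j p) = F ((A i j * B j p) * C p i) := by
      intro p j i
      rw [hassoc, hcomm]
    calc (∑ i, ∑ j, ∑ p, F ((A i j * B j p) * C p i))
        = ∑ j, ∑ i, ∑ p, F ((A i j * B j p) * C p i) := Finset.sum_comm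
      _ = ∑ j, ∑ p, ∑ i, F ((A i j * B j p) * C p i) :=
          Finset.sum_congr rfl fun j _ => Finset.sum_comm
      _ = ∑ p, ∑ j, ∑ i, F ((A i j * B j p) * C p i) := Finset.sum_comm
      _ = ∑ p, ∑ j, ∑ i, F ((C p i * A i j) * B j p) := by
          exact Finset.sum_congr rfl fun p _ => Finset.sum_congr rfl fun j _ =>
            Finset.sum_congr rfl fun i _ => (this p j i).symm
end

section
/- Let K be a unital, not necessarily associative, real algebra with conjugation and a norm satisfying the conjugation-norm law. For t, x : ℝ and y : K, let A := !![(t+x) • 1, y; star y, (t−x) • 1] and let Ã := A − (Matrix.trace A) • 1 be its trace reversal. Then A * Ã = Ã * A = ((−t^2 + x^2 + ‖y‖^2) : ℝ) • (1 : Matrix (Fin 2) (Fin 2) K), i.e. both products equal minus the determinant of A times the identity. -/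
/-- For a vector `A ∈ h₂(K)` with trace reversal `Ã`, one has
`A Ã = Ã A = -det(A) 1`, where `-det A = -t² + x² + ‖y‖²`. -/
theorem vector_mul_trace_reversal {K : Type*} [NonAssocRing K] [Module ℝ K]
    [SMulCommClass ℝ K K] [IsScalarTower ℝ K K] [Norm K]
    (norm_eq_zero : ∀ a : K, ‖a‖ = 0 ↔ a = 0)
    (norm_add_le : ∀ a b : K, ‖a + b‖ ≤ ‖a‖ + ‖b‖)
    (norm_neg : ∀ a : K, ‖-a‖ = ‖a‖)
    (norm_smul_le : ∀ (r : ℝ) (a : K), ‖r • a‖ ≤ |r| * ‖a‖)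
    (star : K →ₗ[ℝ] K)
    (star_star : ∀ a : K, star (star a) = a)
    (star_mul : ∀ a b : K, star (a * b) = star b * star a)
    (real_cond : ∀ a : K, ∃ r : ℝ, a + star a = r • (1 : K))
    (mul_star_self : ∀ a : K, a * star a = (‖a‖ ^ 2 : ℝ) • (1 : K))
    (star_mul_self : ∀ a : K, star a * a = (‖a‖ ^ 2 : ℝ) • (1 : K))
    (t x : ℝ) (y : K) :
    let A : Matrix (Fin 2) (Fin 2) K :=
      !![(t + x) • (1 : K), y; star y, (t - x) • (1 : K)]
    let At : Matrix (Fin 2) (Fin 2) K :=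
      A - (Matrix.trace A) • (1 : Matrix (Fin 2) (Fin 2) K)
    A * At = ((-t ^ 2 + x ^ 2 + ‖y‖ ^ 2 : ℝ)) • (1 : Matrix (Fin 2) (Fin 2) K) ∧
    At * A = ((-t ^ 2 + x ^ 2 + ‖y‖ ^ 2 : ℝ)) • (1 : Matrix (Fin 2) (Fin 2) K) := by
  intro A At
  have htr : Matrix.trace A = (2*t) • (1:K) := by
    show ∑ i, A i i = _
    simp [A, Fin.sum_univ_two]
    module
  constructor <;>
  · ext i j
    fin_cases i <;> fin_cases j <;>
      simp [A, At, htr, Matrix.mul_apply, Fin.sum_univ_two, Matrix.one_apply,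
        Matrix.smul_apply, Matrix.sub_apply, smul_mul_assoc, mul_smul_comm,
        mul_star_self, star_mul_self, sub_mul, mul_sub, smul_smul] <;>
      module
end

section
/- Let K be a unital, not necessarily associative, real algebra with conjugation satisfying the reality condition. For hermitian matrices A := !![(t₁+x₁) • 1, y₁; star y₁, (t₁−x₁) • 1] and B := !![(t₂+x₂) • 1, y₂; star y₂, (t₂−x₂) • 1] with trace reversals Ã, B̃, the real trace of A*B̃ equals that of Ã*B and computes the Minkowski inner product: Matrix.trace(A * B̃) + star(Matrix.trace(A * B̃)) = Matrix.trace(Ã * B) + star(Matrix.trace(Ã * B)) = ((−4*t₁*t₂ + 4*x₁*x₂) : ℝ) • (1 : K) + 2 • (y₁ * star y₂ + y₂ * star y₁). -/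
/-- The real trace of `A * B̃` equals that of `Ã * B` and computes (twice) the
Minkowski inner product of the vectors `A` and `B`. -/
theorem re_trace_minkowski {K : Type*} [NonAssocRing K] [Module ℝ K]
    [SMulCommClass ℝ K K] [IsScalarTower ℝ K K]
    (star : K →ₗ[ℝ] K)
    (star_star : ∀ a : K, star (star a) = a)
    (star_mul : ∀ a b : K, star (a * b) = star b * star a)
    (real_cond : ∀ a : K, ∃ r : ℝ, a + star a = r • (1 : K))
    (t₁ x₁ t₂ x₂ : ℝ) (y₁ y₂ : K) :
    let A : Matrix (Fin 2) (Fin 2) K :=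
      !![(t₁ + x₁) • (1 : K), y₁; star y₁, (t₁ - x₁) • (1 : K)]
    let B : Matrix (Fin 2) (Fin 2) K :=
      !![(t₂ + x₂) • (1 : K), y₂; star y₂, (t₂ - x₂) • (1 : K)]
    let At : Matrix (Fin 2) (Fin 2) K :=
      A - (Matrix.trace A) • (1 : Matrix (Fin 2) (Fin 2) K)
    let Bt : Matrix (Fin 2) (Fin 2) K :=
      B - (Matrix.trace B) • (1 : Matrix (Fin 2) (Fin 2) K)
    Matrix.trace (A * Bt) + star (Matrix.trace (A * Bt)) =
      Matrix.trace (At * B) + star (Matrix.trace (At * B)) ∧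
    Matrix.trace (A * Bt) + star (Matrix.trace (A * Bt)) =
      ((-4 * t₁ * t₂ + 4 * x₁ * x₂ : ℝ)) • (1 : K) +
        2 • (y₁ * star y₂ + y₂ * star y₁) := by
  intro A B At Bt
  -- star fixes 1
  have h1 : star (1 : K) = 1 := by
    have h := star_mul (star (1 : K)) 1
    rw [mul_one, star_star] at h
    rw [mul_one] at h
    exact h.symm
  -- key identity: real parts of (a * star b) and (star a * b) agree
  have key : ∀ a b : K, star a * b + star b * a = a * star b + b * star a := by
    intro a b
    obtain ⟨r, hr⟩ := real_cond a
    obtain ⟨s, hs⟩ := real_cond b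
    have ha : star a = r • (1 : K) - a := eq_sub_of_add_eq' hr
    have hb : star b = s • (1 : K) - b := eq_sub_of_add_eq' hs
    rw [ha, hb]
    simp only [sub_mul, mul_sub, smul_mul_assoc, mul_smul_comm, one_mul, mul_one]
    abel
  -- explicit forms of the trace-reversed matrices
  have hAt : At = !![-(t₁ - x₁) • (1 : K), y₁; star y₁, -(t₁ + x₁) • (1 : K)] := by
    show A - _ = _
    ext i j
    fin_cases i <;> fin_cases j <;>
      simp [A, Matrix.trace_fin_two, Matrix.one_apply] <;> module
  have hBt : Bt = !![-(t₂ - x₂) • (1 : K), y₂; star y₂, -(t₂ + x₂) • (1 : K)] := by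
    show B - _ = _
    ext i j
    fin_cases i <;> fin_cases j <;>
      simp [B, Matrix.trace_fin_two, Matrix.one_apply] <;> module
  have hT1 : Matrix.trace (A * Bt) =
      (-2 * (t₁ * t₂) + 2 * (x₁ * x₂)) • (1 : K) + (y₁ * star y₂ + star y₁ * y₂) := by
    rw [hBt]
    show Matrix.trace (!![(t₁ + x₁) • (1 : K), y₁; star y₁, (t₁ - x₁) • (1 : K)] * _) = _
    rw [Matrix.mul_fin_two, Matrix.trace_fin_two]
    simp [smul_mul_assoc, mul_smul_comm]
    module
  have hT2 : Matrix.trace (At * B) =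
      (-2 * (t₁ * t₂) + 2 * (x₁ * x₂)) • (1 : K) + (y₁ * star y₂ + star y₁ * y₂) := by
    rw [hAt]
    show Matrix.trace (_ * !![(t₂ + x₂) • (1 : K), y₂; star y₂, (t₂ - x₂) • (1 : K)]) = _
    rw [Matrix.mul_fin_two, Matrix.trace_fin_two]
    simp [smul_mul_assoc, mul_smul_comm]
    module
  refine ⟨by rw [hT1, hT2], ?_⟩
  rw [hT1]
  simp only [map_add, map_smul, h1, star_mul, star_star]
  have := key y₁ y₂
  -- goal: scalar•1 + (y₁ sy₂ + sy₁ y₂) + (scalar•1 + (y₂ sy₁ + sy₂ y₁)) = ...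
  rw [two_smul]
  calc (-2 * (t₁ * t₂) + 2 * (x₁ * x₂)) • (1 : K) + (y₁ * star y₂ + star y₁ * y₂) +
        ((-2 * (t₁ * t₂) + 2 * (x₁ * x₂)) • (1 : K) + (y₂ * star y₁ + star y₂ * y₁))
      = ((-2 * (t₁ * t₂) + 2 * (x₁ * x₂)) • (1 : K) + (-2 * (t₁ * t₂) + 2 * (x₁ * x₂)) • (1 : K)) +
        ((star y₁ * y₂ + star y₂ * y₁) + (y₁ * star y₂ + y₂ * star y₁)) := by abel
    _ = (-4 * t₁ * t₂ + 4 * x₁ * x₂) • (1 : K) +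
        (y₁ * star y₂ + y₂ * star y₁ + (y₁ * star y₂ + y₂ * star y₁)) := by
        rw [key y₁ y₂]; rw [← add_smul]; ring_nf
end

section
/- Let K be a unital, not necessarily associative, real algebra with conjugation satisfying the reality condition, alternative, with a norm satisfying the conjugation-norm law. For t, x : ℝ, y : K, let A := !![(t+x) • 1, y; star y, (t−x) • 1] and Ã := A − (Matrix.trace A) • 1. Then the Clifford relation holds on spinors: for every ψ : Fin 2 → K, Ã.mulVec (A.mulVec ψ) = ((−t^2 + x^2 + ‖y‖^2) : ℝ) • ψ and A.mulVec (Ã.mulVec ψ) = ((−t^2 + x^2 + ‖y‖^2) : ℝ) • ψ. -/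
/-- The Clifford relation on spinors: acting by a vector `A` and then by its
trace reversal `Ã` (in either order) rescales a spinor by the Minkowski
norm `-t² + x² + ‖y‖²` of `A`. -/
theorem clifford_relation_on_spinors {K : Type*} [NonAssocRing K] [Module ℝ K]
    [SMulCommClass ℝ K K] [IsScalarTower ℝ K K] [Norm K]
    (norm_eq_zero : ∀ a : K, ‖a‖ = 0 ↔ a = 0)
    (norm_add_le : ∀ a b : K, ‖a + b‖ ≤ ‖a‖ + ‖b‖)
    (norm_neg : ∀ a : K, ‖-a‖ = ‖a‖)
    (norm_smul_le : ∀ (r : ℝ) (a : K), ‖r • a‖ ≤ |r| * ‖a‖)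
    (star : K →ₗ[ℝ] K)
    (star_star : ∀ a : K, star (star a) = a)
    (star_mul : ∀ a b : K, star (a * b) = star b * star a)
    (real_cond : ∀ a : K, ∃ r : ℝ, a + star a = r • (1 : K))
    (alt_left : ∀ a b : K, (a * a) * b = a * (a * b))
    (alt_right : ∀ a b : K, (a * b) * b = a * (b * b))
    (mul_star_self : ∀ a : K, a * star a = (‖a‖ ^ 2 : ℝ) • (1 : K))
    (star_mul_self : ∀ a : K, star a * a = (‖a‖ ^ 2 : ℝ) • (1 : K))
    (t x : ℝ) (y : K) (ψ : Fin 2 → K) :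
    let A : Matrix (Fin 2) (Fin 2) K :=
      !![(t + x) • (1 : K), y; star y, (t - x) • (1 : K)]
    let At : Matrix (Fin 2) (Fin 2) K :=
      A - (Matrix.trace A) • (1 : Matrix (Fin 2) (Fin 2) K)
    At.mulVec (A.mulVec ψ) = ((-t ^ 2 + x ^ 2 + ‖y‖ ^ 2 : ℝ)) • ψ ∧
    A.mulVec (At.mulVec ψ) = ((-t ^ 2 + x ^ 2 + ‖y‖ ^ 2 : ℝ)) • ψ := by

  intro A At
  obtain ⟨r, hrr⟩ := real_cond y
  have hs : star y = r • (1 : K) - y := by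
    rw [eq_sub_iff_add_eq, add_comm]; exact hrr
  have hyy : y * y = r • y - (‖y‖ ^ 2 : ℝ) • (1 : K) := by
    have h := mul_star_self y
    rw [hs, mul_sub, mul_smul_comm, mul_one] at h
    rw [eq_sub_iff_add_eq, ← h]; abel
  have hl : ∀ b : K, y * (star y * b) = (‖y‖ ^ 2 : ℝ) • b := by
    intro b
    rw [hs, sub_mul, mul_sub, ← alt_left, hyy, sub_mul]
    simp only [smul_mul_assoc, one_mul, mul_smul_comm]
    abel
  have hr2 : ∀ b : K, star y * (y * b) = (‖y‖ ^ 2 : ℝ) • b := by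
    intro b
    rw [hs, sub_mul, ← alt_left, hyy, sub_mul]
    simp only [smul_mul_assoc, one_mul, mul_smul_comm]
    abel
  have htr : Matrix.trace A = (2 * t) • (1 : K) := by
    simp [A, Matrix.trace_fin_two, ← add_smul]; ring_nf
  constructor <;>
  · funext i
    fin_cases i <;>
    · simp only [A, At, Fin.mk_zero, Fin.mk_one, Matrix.mulVec,
        dotProduct, Fin.sum_univ_two, Matrix.sub_apply,
        Matrix.smul_apply, Matrix.one_apply, htr, Matrix.of_apply,
        Matrix.cons_val_zero, Matrix.cons_val_one, Matrix.head_cons,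
        Matrix.cons_val', Matrix.empty_val', Matrix.cons_val_fin_one,
        Fin.isValue]
      norm_num
      simp only [smul_mul_assoc, one_mul, mul_one, mul_smul_comm, sub_mul,
        mul_sub, smul_sub, smul_add, mul_add, add_mul, zero_mul, mul_zero,
        smul_zero, sub_zero, hl, hr2, smul_smul, Pi.smul_apply]
      module
end

section
/- Let K be a unital, not necessarily associative, real algebra with conjugation satisfying the reality condition, alternative, with a norm satisfying the conjugation-norm law. For t, x : ℝ, y : K, let A := !![(t+x) • 1, y; star y, (t−x) • 1] and Ã := A − (Matrix.trace A) • 1. Then the spinor pairing is rescaled by the Minkowski norm of A under the action of vectors: for all ψ, φ : Fin 2 → K, P(Ã.mulVec φ, A.mulVec ψ) + star(P(Ã.mulVec φ, A.mulVec ψ)) = ((−t^2 + x^2 + ‖y‖^2) : ℝ) • (P(ψ, φ) + star(P(ψ, φ))), where P(ψ,φ) := ∑ i, star (ψ i) * φ i. -/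
set_option linter.unusedSectionVars false
set_option linter.unusedVariables false
set_option maxHeartbeats 1000000

section Aux
variable {K : Type*} [NonAssocRing K] [Module ℝ K] [SMulCommClass ℝ K K] [IsScalarTower ℝ K K]
variable {K : Type*} [NonAssocRing K] [Module ℝ K] [SMulCommClass ℝ K K] [IsScalarTower ℝ K K]

def myAssoc (a b c : K) : K := (a*b)*c - a*(b*c)

lemma myAssoc_sub₁ (a a' b c : K) : myAssoc (a - a') b c = myAssoc a b c - myAssoc a' b c := by
  simp only [myAssoc, sub_mul, mul_sub]; abel

lemma myAssoc_sub₂ (a b b' c : K) : myAssoc a (b - b') c = myAssoc a b c - myAssoc a b' c := by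
  simp only [myAssoc, sub_mul, mul_sub]; abel

lemma myAssoc_sub₃ (a b c c' : K) : myAssoc a b (c - c') = myAssoc a b c - myAssoc a b c' := by
  simp only [myAssoc, sub_mul, mul_sub]; abel

lemma myAssoc_one₁ (r : ℝ) (b c : K) : myAssoc (r • (1:K)) b c = 0 := by
  simp [myAssoc, smul_mul_assoc, one_mul]

lemma myAssoc_one₂ (r : ℝ) (a c : K) : myAssoc a (r • (1:K)) c = 0 := by
  simp [myAssoc, smul_mul_assoc, mul_smul_comm, one_mul, mul_one]

lemma myAssoc_one₃ (r : ℝ) (a b : K) : myAssoc a b (r • (1:K)) = 0 := by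
  simp [myAssoc, smul_mul_assoc, mul_smul_comm, mul_one]

lemma myAssoc_lin_left (alt_left : ∀ a b : K, (a * a) * b = a * (a * b)) (a b c : K) :
    myAssoc a b c + myAssoc b a c = 0 := by
  have h := alt_left (a + b) c
  simp only [add_mul, mul_add] at h
  rw [alt_left a c, alt_left b c] at h
  have h2 : myAssoc a b c + myAssoc b a c =
      (a*(a*c) + b * a * c + (a * b * c + b*(b*c))) - (a*(a*c) + b*(a*c) + (a*(b*c) + b*(b*c))) := by
    simp only [myAssoc]; abel
  rw [h2, h, sub_self]

lemma myAssoc_lin_right (alt_right : ∀ a b : K, (a * b) * b = a * (b * b)) (a b c : K) :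
    myAssoc a b c + myAssoc a c b = 0 := by
  have h := alt_right a (b + c)
  simp only [add_mul, mul_add] at h
  rw [alt_right a b, alt_right a c] at h
  have h2 : myAssoc a b c + myAssoc a c b =
      (a*(b*b) + a * c * b + (a * b * c + a*(c*c))) - (a*(b*b) + a*(c*b) + (a*(b*c) + a*(c*c))) := by
    simp only [myAssoc]; abel
  rw [h2, h, sub_self]

lemma myAssoc_swap (alt_left : ∀ a b : K, (a * a) * b = a * (a * b))
    (alt_right : ∀ a b : K, (a * b) * b = a * (b * b)) (a b c : K) :
    myAssoc a b c = - myAssoc c b a := by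
  have h1 := myAssoc_lin_right alt_right a b c
  have h2 := myAssoc_lin_left alt_left a c b
  have h3 := myAssoc_lin_right alt_right c a b
  have key : myAssoc a b c + myAssoc c b a =
      (myAssoc a b c + myAssoc a c b) - (myAssoc a c b + myAssoc c a b)
        + (myAssoc c a b + myAssoc c b a) := by abel
  rw [h1, h2, h3] at key
  simp only [sub_zero, zero_sub, neg_zero, add_zero, zero_add] at key
  exact eq_neg_of_add_eq_zero_left key

lemma star_myAssoc (star : K →ₗ[ℝ] K)
    (star_mul : ∀ a b : K, star (a * b) = star b * star a)
    (real_cond : ∀ a : K, ∃ r : ℝ, a + star a = r • (1 : K))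
    (alt_left : ∀ a b : K, (a * a) * b = a * (a * b))
    (alt_right : ∀ a b : K, (a * b) * b = a * (b * b)) (a b c : K) :
    star (myAssoc a b c) = - myAssoc a b c := by
  obtain ⟨ra, ha⟩ := real_cond a
  obtain ⟨rb, hb⟩ := real_cond b
  obtain ⟨rc, hc⟩ := real_cond c
  have hsa : star a = ra • (1:K) - a := by rw [← ha]; abel
  have hsb : star b = rb • (1:K) - b := by rw [← hb]; abel
  have hsc : star c = rc • (1:K) - c := by rw [← hc]; abel
  have h1 : star (myAssoc a b c) = - myAssoc (star c) (star b) (star a) := by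
    simp only [myAssoc, map_sub, star_mul]
    abel
  rw [h1, hsa, hsb, hsc]
  simp only [myAssoc_sub₁, myAssoc_sub₂, myAssoc_sub₃, myAssoc_one₁, myAssoc_one₂, myAssoc_one₃,
    sub_zero, zero_sub, sub_neg_eq_add, zero_add, neg_neg]
  rw [myAssoc_swap alt_left alt_right c b a]

variable {K : Type*} [NonAssocRing K] [Module ℝ K] [SMulCommClass ℝ K K] [IsScalarTower ℝ K K]

lemma trace_assoc (star : K →ₗ[ℝ] K)
    (star_mul : ∀ a b : K, star (a * b) = star b * star a)
    (real_cond : ∀ a : K, ∃ r : ℝ, a + star a = r • (1 : K))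
    (alt_left : ∀ a b : K, (a * a) * b = a * (a * b))
    (alt_right : ∀ a b : K, (a * b) * b = a * (b * b)) (a b c : K) :
    (a*b)*c + star ((a*b)*c) = a*(b*c) + star (a*(b*c)) := by
  have h := star_myAssoc star star_mul real_cond alt_left alt_right a b c
  simp only [myAssoc, map_sub, neg_sub] at h
  have h2 : (a*b)*c + star ((a*b)*c) - (a*(b*c) + star (a*(b*c))) =
      (star ((a*b)*c) - star (a*(b*c))) - (a*(b*c) - (a*b)*c) := by abel
  rw [h, sub_self] at h2
  exact sub_eq_zero.mp h2

lemma starY_mul [Norm K] (star : K →ₗ[ℝ] K)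
    (real_cond : ∀ a : K, ∃ r : ℝ, a + star a = r • (1 : K))
    (alt_left : ∀ a b : K, (a * a) * b = a * (a * b))
    (star_mul_self : ∀ a : K, star a * a = (‖a‖ ^ 2 : ℝ) • (1 : K))
    (y d : K) : star y * (y * d) = (‖y‖ ^ 2 : ℝ) • d := by
  obtain ⟨s, hs⟩ := real_cond y
  have hsy : star y = s • (1:K) - y := by rw [← hs]; abel
  have h2 : s • y - y * y = (‖y‖ ^ 2 : ℝ) • (1:K) := by
    rw [← star_mul_self y, hsy, sub_mul, smul_mul_assoc, one_mul]
  have h3 : star y * (y * d) = (s • y - y * y) * d := by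
    rw [hsy]
    simp only [sub_mul, mul_sub, smul_mul_assoc, mul_smul_comm, one_mul, ← alt_left]
  rw [h3, h2, smul_mul_assoc, one_mul]

lemma y_mul_star [Norm K] (star : K →ₗ[ℝ] K)
    (real_cond : ∀ a : K, ∃ r : ℝ, a + star a = r • (1 : K))
    (alt_left : ∀ a b : K, (a * a) * b = a * (a * b))
    (mul_star_self : ∀ a : K, a * star a = (‖a‖ ^ 2 : ℝ) • (1 : K))
    (y d : K) : y * (star y * d) = (‖y‖ ^ 2 : ℝ) • d := by
  obtain ⟨s, hs⟩ := real_cond y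
  have hsy : star y = s • (1:K) - y := by rw [← hs]; abel
  have h2 : s • y - y * y = (‖y‖ ^ 2 : ℝ) • (1:K) := by
    rw [← mul_star_self y, hsy, mul_sub, mul_smul_comm, mul_one]
  have h3 : y * (star y * d) = (s • y - y * y) * d := by
    rw [hsy]
    simp only [sub_mul, mul_sub, smul_mul_assoc, mul_smul_comm, one_mul, ← alt_left]
  rw [h3, h2, smul_mul_assoc, one_mul]


end Aux

/-- The spinor pairing is rescaled by the Minkowski norm of the vector `A`
under the action of `A` and its trace reversal `Ã`:
`⟨Ã φ, A ψ⟩ = g(A,A) ⟨ψ, φ⟩` (with both sides doubled via `x + star x`). -/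
theorem pairing_rescaled_by_minkowski_norm {K : Type*} [NonAssocRing K] [Module ℝ K]
    [SMulCommClass ℝ K K] [IsScalarTower ℝ K K] [Norm K]
    (norm_eq_zero : ∀ a : K, ‖a‖ = 0 ↔ a = 0)
    (norm_add_le : ∀ a b : K, ‖a + b‖ ≤ ‖a‖ + ‖b‖)
    (norm_neg : ∀ a : K, ‖-a‖ = ‖a‖)
    (norm_smul_le : ∀ (r : ℝ) (a : K), ‖r • a‖ ≤ |r| * ‖a‖)
    (star : K →ₗ[ℝ] K)
    (star_star : ∀ a : K, star (star a) = a)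
    (star_mul : ∀ a b : K, star (a * b) = star b * star a)
    (real_cond : ∀ a : K, ∃ r : ℝ, a + star a = r • (1 : K))
    (alt_left : ∀ a b : K, (a * a) * b = a * (a * b))
    (alt_right : ∀ a b : K, (a * b) * b = a * (b * b))
    (mul_star_self : ∀ a : K, a * star a = (‖a‖ ^ 2 : ℝ) • (1 : K))
    (star_mul_self : ∀ a : K, star a * a = (‖a‖ ^ 2 : ℝ) • (1 : K))
    (t x : ℝ) (y : K) (ψ φ : Fin 2 → K) :
    let A : Matrix (Fin 2) (Fin 2) K :=
      !![(t + x) • (1 : K), y; star y, (t - x) • (1 : K)]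
    let At : Matrix (Fin 2) (Fin 2) K :=
      A - (Matrix.trace A) • (1 : Matrix (Fin 2) (Fin 2) K)
    let P : (Fin 2 → K) → (Fin 2 → K) → K := fun ψ φ => ∑ i, star (ψ i) * φ i
    P (At.mulVec φ) (A.mulVec ψ) + star (P (At.mulVec φ) (A.mulVec ψ)) =
      ((-t ^ 2 + x ^ 2 + ‖y‖ ^ 2 : ℝ)) • (P ψ φ + star (P ψ φ)) := by
  intro A At P
  have hA0 : A.mulVec ψ 0 = (t + x) • ψ 0 + y * ψ 1 := by
    simp [A, Matrix.mulVec, dotProduct, Fin.sum_univ_two, smul_mul_assoc]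
  have hA1 : A.mulVec ψ 1 = star y * ψ 0 + (t - x) • ψ 1 := by
    simp [A, Matrix.mulVec, dotProduct, Fin.sum_univ_two, smul_mul_assoc]
  have htr : Matrix.trace A = (2 * t) • (1 : K) := by
    simp [A, Matrix.trace, Fin.sum_univ_two, Matrix.diag, ← add_smul]
    rw [two_mul]
  have hAt0 : At.mulVec φ 0 = (x - t) • φ 0 + y * φ 1 := by
    simp [At, htr, Matrix.mulVec, dotProduct, Fin.sum_univ_two, smul_mul_assoc,
      Matrix.sub_apply, Matrix.smul_apply, Matrix.one_apply, sub_mul, A]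
    module
  have hAt1 : At.mulVec φ 1 = star y * φ 0 + (-t - x) • φ 1 := by
    simp [At, htr, Matrix.mulVec, dotProduct, Fin.sum_univ_two, smul_mul_assoc,
      Matrix.sub_apply, Matrix.smul_apply, Matrix.one_apply, sub_mul, A]
    module
  simp only [P, Fin.sum_univ_two, hA0, hA1, hAt0, hAt1]
  -- abbreviations
  set p0 := star (φ 0) with hp0
  set p1 := star (φ 1) with hp1
  set sy := star y with hsy
  -- expansion of the two products
  have E0 : star ((x - t) • φ 0 + y * φ 1) * ((t + x) • ψ 0 + y * ψ 1) =
      ((x - t) * (t + x)) • (p0 * ψ 0) + (x - t) • (p0 * (y * ψ 1))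
        + (t + x) • ((p1 * sy) * ψ 0) + (p1 * sy) * (y * ψ 1) := by
    simp only [map_add, map_smul, star_mul, add_mul, mul_add, smul_mul_assoc,
      mul_smul_comm, smul_smul, ← hp0, ← hp1, ← hsy]
    module
  have E1 : star (sy * φ 0 + (-t - x) • φ 1) * (sy * ψ 0 + (t - x) • ψ 1) =
      (p0 * y) * (sy * ψ 0) + (t - x) • ((p0 * y) * ψ 1)
        + (-t - x) • (p1 * (sy * ψ 0)) + ((-t - x) * (t - x)) • (p1 * ψ 1) := by
    simp only [map_add, map_smul, star_mul, hsy, star_star, add_mul, mul_add,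
      smul_mul_assoc, mul_smul_comm, smul_smul, ← hp0, ← hp1]
    module
  have Qassoc3 : (p1 * sy) * ψ 0 + star ((p1 * sy) * ψ 0) =
      p1 * (sy * ψ 0) + star (p1 * (sy * ψ 0)) :=
    trace_assoc star star_mul real_cond alt_left alt_right p1 sy (ψ 0)
  have Qassoc6 : (p0 * y) * ψ 1 + star ((p0 * y) * ψ 1) =
      p0 * (y * ψ 1) + star (p0 * (y * ψ 1)) :=
    trace_assoc star star_mul real_cond alt_left alt_right p0 y (ψ 1)
  have Q4 : (p1 * sy) * (y * ψ 1) + star ((p1 * sy) * (y * ψ 1)) =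
      (‖y‖ ^ 2 : ℝ) • (p1 * ψ 1 + star (p1 * ψ 1)) := by
    rw [trace_assoc star star_mul real_cond alt_left alt_right p1 sy (y * ψ 1), hsy,
      starY_mul star real_cond alt_left star_mul_self, mul_smul_comm, map_smul, ← smul_add]
  have Q5 : (p0 * y) * (sy * ψ 0) + star ((p0 * y) * (sy * ψ 0)) =
      (‖y‖ ^ 2 : ℝ) • (p0 * ψ 0 + star (p0 * ψ 0)) := by
    rw [trace_assoc star star_mul real_cond alt_left alt_right p0 y (sy * ψ 0), hsy,
      y_mul_star star real_cond alt_left mul_star_self, mul_smul_comm, map_smul, ← smul_add]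
  have Qswap0 : star (ψ 0) * φ 0 + star (star (ψ 0) * φ 0) = p0 * ψ 0 + star (p0 * ψ 0) := by
    simp only [star_mul, star_star, hp0]
    abel
  have Qswap1 : star (ψ 1) * φ 1 + star (star (ψ 1) * φ 1) = p1 * ψ 1 + star (p1 * ψ 1) := by
    simp only [star_mul, star_star, hp1]
    abel
  calc star ((x - t) • φ 0 + y * φ 1) * ((t + x) • ψ 0 + y * ψ 1)
        + star (sy * φ 0 + (-t - x) • φ 1) * (sy * ψ 0 + (t - x) • ψ 1)
        + star (star ((x - t) • φ 0 + y * φ 1) * ((t + x) • ψ 0 + y * ψ 1)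
          + star (sy * φ 0 + (-t - x) • φ 1) * (sy * ψ 0 + (t - x) • ψ 1))
      = ((x - t) * (t + x)) • (p0 * ψ 0 + star (p0 * ψ 0))
        + (x - t) • (p0 * (y * ψ 1) + star (p0 * (y * ψ 1)))
        + (t + x) • ((p1 * sy) * ψ 0 + star ((p1 * sy) * ψ 0))
        + ((p1 * sy) * (y * ψ 1) + star ((p1 * sy) * (y * ψ 1)))
        + ((p0 * y) * (sy * ψ 0) + star ((p0 * y) * (sy * ψ 0)))
        + (t - x) • ((p0 * y) * ψ 1 + star ((p0 * y) * ψ 1))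
        + (-t - x) • (p1 * (sy * ψ 0) + star (p1 * (sy * ψ 0)))
        + ((-t - x) * (t - x)) • (p1 * ψ 1 + star (p1 * ψ 1)) := by
        rw [E0, E1]
        simp only [map_add, map_smul, smul_add]
        abel
    _ = ((x - t) * (t + x)) • (p0 * ψ 0 + star (p0 * ψ 0))
        + (x - t) • (p0 * (y * ψ 1) + star (p0 * (y * ψ 1)))
        + (t + x) • (p1 * (sy * ψ 0) + star (p1 * (sy * ψ 0)))
        + (‖y‖ ^ 2 : ℝ) • (p1 * ψ 1 + star (p1 * ψ 1))
        + (‖y‖ ^ 2 : ℝ) • (p0 * ψ 0 + star (p0 * ψ 0))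
        + (t - x) • (p0 * (y * ψ 1) + star (p0 * (y * ψ 1)))
        + (-t - x) • (p1 * (sy * ψ 0) + star (p1 * (sy * ψ 0)))
        + ((-t - x) * (t - x)) • (p1 * ψ 1 + star (p1 * ψ 1)) := by
        rw [Qassoc3, Qassoc6, Q4, Q5]
    _ = ((-t ^ 2 + x ^ 2 + ‖y‖ ^ 2 : ℝ)) • ((p0 * ψ 0 + star (p0 * ψ 0))
          + (p1 * ψ 1 + star (p1 * ψ 1))) := by
        match_scalars <;> ring
    _ = ((-t ^ 2 + x ^ 2 + ‖y‖ ^ 2 : ℝ)) • ((star (ψ 0) * φ 0 + star (star (ψ 0) * φ 0))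
          + (star (ψ 1) * φ 1 + star (star (ψ 1) * φ 1))) := by
        rw [Qswap0, Qswap1]
    _ = ((-t ^ 2 + x ^ 2 + ‖y‖ ^ 2 : ℝ)) • (star (ψ 0) * φ 0 + star (ψ 1) * φ 1
          + star (star (ψ 0) * φ 0 + star (ψ 1) * φ 1)) := by
        rw [map_add]
        module
end

section
/- Let K be a unital, not necessarily associative, real algebra with conjugation satisfying the reality condition, and suppose K is alternative. For ψ, φ : Fin 2 → K and any hermitian matrix A := !![(t+x) • 1, y; star y, (t−x) • 1], the spinor bilinear satisfies 2 • (P(ψ, A.mulVec φ) + star(P(ψ, A.mulVec φ))) = Matrix.trace(N * A) + star(Matrix.trace(N * A)), where P(ψ,φ) := ∑ i, star (ψ i) * φ i and N is the matrix with entries N i j := ψ i * star (φ j) + φ i * star (ψ j). (This is the identity Retr(ψ† A φ) = ½ Retr((ψφ† + φψ†) A) showing ψ·φ is the trace reversal of ψφ† + φψ†.) -/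
set_option linter.unusedSectionVars false

section Helpers
variable {K : Type*} [NonAssocRing K] [Module ℝ K]
    [SMulCommClass ℝ K K] [IsScalarTower ℝ K K]

private def ascSBT (a b c : K) : K := a * b * c - a * (b * c)

private lemma ascSBT_add₁ (a b c d : K) :
    ascSBT (a + b) c d = ascSBT a c d + ascSBT b c d := by
  simp only [ascSBT, add_mul]; abel

private lemma ascSBT_add₂ (a b c d : K) :
    ascSBT a (b + c) d = ascSBT a b d + ascSBT a c d := by
  simp only [ascSBT, mul_add, add_mul]; abel

private lemma ascSBT_add₃ (a b c d : K) :
    ascSBT a b (c + d) = ascSBT a b c + ascSBT a b d := by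
  simp only [ascSBT, mul_add]; abel

private lemma ascSBT_sub₁ (a b c d : K) :
    ascSBT (a - b) c d = ascSBT a c d - ascSBT b c d := by
  simp only [ascSBT, sub_mul]; abel

private lemma ascSBT_sub₂ (a b c d : K) :
    ascSBT a (b - c) d = ascSBT a b d - ascSBT a c d := by
  simp only [ascSBT, mul_sub, sub_mul]; abel

private lemma ascSBT_sub₃ (a b c d : K) :
    ascSBT a b (c - d) = ascSBT a b c - ascSBT a b d := by
  simp only [ascSBT, mul_sub]; abel

private lemma ascSBT_smul₁ (r : ℝ) (a b c : K) :
    ascSBT (r • a) b c = r • ascSBT a b c := by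
  simp only [ascSBT, smul_mul_assoc, smul_sub]

private lemma ascSBT_smul₂ (r : ℝ) (a b c : K) :
    ascSBT a (r • b) c = r • ascSBT a b c := by
  simp only [ascSBT, smul_mul_assoc, mul_smul_comm, smul_sub]

private lemma ascSBT_smul₃ (r : ℝ) (a b c : K) :
    ascSBT a b (r • c) = r • ascSBT a b c := by
  simp only [ascSBT, mul_smul_comm, smul_sub]

private lemma ascSBT_one₁ (b c : K) : ascSBT 1 b c = 0 := by
  simp [ascSBT]

private lemma ascSBT_one₂ (b c : K) : ascSBT b 1 c = 0 := by
  simp [ascSBT]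

private lemma ascSBT_one₃ (b c : K) : ascSBT b c 1 = 0 := by
  simp [ascSBT]

private lemma ascSBT_swap₁₂ (alt_left : ∀ a b : K, (a * a) * b = a * (a * b))
    (a b c : K) : ascSBT a b c = - ascSBT b a c := by
  have h0 : ∀ u v : K, ascSBT u u v = 0 := fun u v => sub_eq_zero_of_eq (alt_left u v)
  have h := h0 (a + b) c
  rw [ascSBT_add₁, ascSBT_add₂, ascSBT_add₂, h0, h0] at h
  rw [zero_add, add_zero] at h
  exact eq_neg_of_add_eq_zero_left h

private lemma ascSBT_swap₂₃ (alt_right : ∀ a b : K, (a * b) * b = a * (b * b))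
    (a b c : K) : ascSBT a b c = - ascSBT a c b := by
  have h0 : ∀ u v : K, ascSBT u v v = 0 := fun u v => sub_eq_zero_of_eq (alt_right u v)
  have h := h0 a (b + c)
  rw [ascSBT_add₂, ascSBT_add₃, ascSBT_add₃, h0, h0] at h
  rw [zero_add, add_zero] at h
  exact eq_neg_of_add_eq_zero_left h


private lemma ascSBT_star (star : K →ₗ[ℝ] K)
    (star_star : ∀ a : K, star (star a) = a)
    (star_mul : ∀ a b : K, star (a * b) = star b * star a)
    (real_cond : ∀ a : K, ∃ r : ℝ, a + star a = r • (1 : K))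
    (a b c : K) : star (ascSBT a b c) = ascSBT c b a := by
  obtain ⟨r, hr⟩ := real_cond a
  obtain ⟨s, hs⟩ := real_cond b
  obtain ⟨u, hu⟩ := real_cond c
  have ha : star a = r • 1 - a := eq_sub_of_add_eq' hr
  have hb : star b = s • 1 - b := eq_sub_of_add_eq' hs
  have hc : star c = u • 1 - c := eq_sub_of_add_eq' hu
  have h1 : star (ascSBT a b c) = - ascSBT (star c) (star b) (star a) := by
    simp only [ascSBT, map_sub, star_mul, mul_sub, sub_mul]
    abel
  rw [h1, ha, hb, hc]
  simp only [ascSBT_sub₁, ascSBT_sub₂, ascSBT_sub₃, ascSBT_smul₁, ascSBT_smul₂,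
    ascSBT_smul₃, ascSBT_one₁, ascSBT_one₂, ascSBT_one₃, smul_zero, sub_zero,
    zero_sub, sub_self, neg_neg, sub_neg_eq_add, zero_add, neg_zero]

private lemma reSBT_assoc (star : K →ₗ[ℝ] K)
    (star_star : ∀ a : K, star (star a) = a)
    (star_mul : ∀ a b : K, star (a * b) = star b * star a)
    (real_cond : ∀ a : K, ∃ r : ℝ, a + star a = r • (1 : K))
    (alt_left : ∀ a b : K, (a * a) * b = a * (a * b))
    (alt_right : ∀ a b : K, (a * b) * b = a * (b * b))
    (a b c : K) : a * b * c + star (a * b * c) = a * (b * c) + star (a * (b * c)) := by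
  have hz : ascSBT a b c + star (ascSBT a b c) = 0 := by
    rw [ascSBT_star star star_star star_mul real_cond]
    rw [ascSBT_swap₁₂ alt_left c b a, ascSBT_swap₂₃ alt_right b c a,
      ascSBT_swap₁₂ alt_left b a c]
    simp
  simp only [ascSBT, map_sub] at hz
  have h2 : (a * b * c + star (a * b * c)) - (a * (b * c) + star (a * (b * c))) = 0 := by
    rw [← hz]; abel
  exact sub_eq_zero.mp h2

private lemma reSBT_comm (star : K →ₗ[ℝ] K)
    (star_mul : ∀ a b : K, star (a * b) = star b * star a)
    (real_cond : ∀ a : K, ∃ r : ℝ, a + star a = r • (1 : K))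
    (a b : K) : a * b + star (a * b) = b * a + star (b * a) := by
  obtain ⟨r, hr⟩ := real_cond a
  obtain ⟨s, hs⟩ := real_cond b
  have ha : star a = r • 1 - a := eq_sub_of_add_eq' hr
  have hb : star b = s • 1 - b := eq_sub_of_add_eq' hs
  rw [star_mul, star_mul, ha, hb]
  simp only [sub_mul, mul_sub, smul_mul_assoc, mul_smul_comm, one_mul, mul_one,
    smul_smul, mul_comm s r]
  module

private lemma keySBT (star : K →ₗ[ℝ] K)
    (star_star : ∀ a : K, star (star a) = a)
    (star_mul : ∀ a b : K, star (a * b) = star b * star a)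
    (real_cond : ∀ a : K, ∃ r : ℝ, a + star a = r • (1 : K))
    (alt_left : ∀ a b : K, (a * a) * b = a * (a * b))
    (alt_right : ∀ a b : K, (a * b) * b = a * (b * b))
    (a b c : K) :
    2 • (star a * (b * c) + star (star a * (b * c))) =
      (a * star c * star b + star (a * star c * star b)) +
      (c * star a * b + star (c * star a * b)) := by
  have t1 : a * star c * star b + star (a * star c * star b)
      = star a * (b * c) + star (star a * (b * c)) := by
    rw [reSBT_assoc star star_star star_mul real_cond alt_left alt_right,
      ← star_mul b c, reSBT_comm star star_mul real_cond]
    have h2 : star (star a * (b * c)) = star (b * c) * a := by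
      rw [star_mul, star_star]
    rw [← h2, star_star]
    exact add_comm _ _
  have t2 : c * star a * b + star (c * star a * b)
      = star a * (b * c) + star (star a * (b * c)) := by
    rw [reSBT_assoc star star_star star_mul real_cond alt_left alt_right,
      reSBT_comm star star_mul real_cond,
      reSBT_assoc star star_star star_mul real_cond alt_left alt_right]
  rw [t1, t2, two_smul]

end Helpers


/-- `2 Retr(ψ† A φ) = Retr((ψφ† + φψ†) A)`: the bilinear `ψ · φ` built from the
pairing agrees with the trace reversal of `ψφ† + φψ†`. -/
theorem spinor_bilinear_eq_trace {K : Type*} [NonAssocRing K] [Module ℝ K]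
    [SMulCommClass ℝ K K] [IsScalarTower ℝ K K]
    (star : K →ₗ[ℝ] K)
    (star_star : ∀ a : K, star (star a) = a)
    (star_mul : ∀ a b : K, star (a * b) = star b * star a)
    (real_cond : ∀ a : K, ∃ r : ℝ, a + star a = r • (1 : K))
    (alt_left : ∀ a b : K, (a * a) * b = a * (a * b))
    (alt_right : ∀ a b : K, (a * b) * b = a * (b * b))
    (t x : ℝ) (y : K) (ψ φ : Fin 2 → K) :
    let A : Matrix (Fin 2) (Fin 2) K :=
      !![(t + x) • (1 : K), y; star y, (t - x) • (1 : K)]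
    let P : (Fin 2 → K) → (Fin 2 → K) → K := fun ψ φ => ∑ i, star (ψ i) * φ i
    let N : Matrix (Fin 2) (Fin 2) K :=
      Matrix.of fun i j => ψ i * star (φ j) + φ i * star (ψ j)
    2 • (P ψ (A.mulVec φ) + star (P ψ (A.mulVec φ))) =
      Matrix.trace (N * A) + star (Matrix.trace (N * A)) := by
  intro A P N
  simp only [A, P, N, Matrix.mulVec, dotProduct, Fin.sum_univ_two,
    Matrix.trace_fin_two, Matrix.mul_apply, Matrix.of_apply,
    Matrix.cons_val', Matrix.cons_val_zero, Matrix.cons_val_one, Matrix.head_cons,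
    Matrix.empty_val', Matrix.cons_val_fin_one, Matrix.head_fin_const]
  simp only [mul_add, add_mul, map_add, smul_add]
  have hone : star (1 : K) = 1 := by
    have h := star_mul 1 (star (1 : K))
    rw [one_mul, star_star, one_mul] at h
    exact h.symm
  have hsm : ∀ r : ℝ, star (r • (1 : K)) = r • (1 : K) := by
    intro r; rw [map_smul, hone]
  have k00 := keySBT star star_star star_mul real_cond alt_left alt_right
    (ψ 0) ((t + x) • (1 : K)) (φ 0)
  have k01 := keySBT star star_star star_mul real_cond alt_left alt_right
    (ψ 0) y (φ 1)
  have k10 := keySBT star star_star star_mul real_cond alt_left alt_right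
    (ψ 1) (star y) (φ 0)
  have k11 := keySBT star star_star star_mul real_cond alt_left alt_right
    (ψ 1) ((t - x) • (1 : K)) (φ 1)
  rw [hsm] at k00 k11
  rw [star_star] at k10
  linear_combination (norm := abel1) k00 + k01 + k10 + k11
end

section
/- The 3-ψ's rule: let K be a unital, not necessarily associative, real algebra with conjugation satisfying the reality condition, alternative, with a norm satisfying the conjugation-norm law. For any spinor ψ : Fin 2 → K, let M be the 2×2 matrix with entries M i j := ψ i * star (ψ j), and let M̃ := M − (Matrix.trace M) • 1 be its trace reversal. Then M̃.mulVec ψ = 0, i.e. (ψ · ψ) ψ = 0. -/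
/-- The 3-ψ's rule: `(ψ · ψ) ψ = 0`, where `ψ · ψ` is (twice) the trace
reversal of the matrix `ψψ†`. -/
theorem three_psis_rule {K : Type*} [NonAssocRing K] [Module ℝ K]
    [SMulCommClass ℝ K K] [IsScalarTower ℝ K K] [Norm K]
    (norm_eq_zero : ∀ a : K, ‖a‖ = 0 ↔ a = 0)
    (norm_add_le : ∀ a b : K, ‖a + b‖ ≤ ‖a‖ + ‖b‖)
    (norm_neg : ∀ a : K, ‖-a‖ = ‖a‖)
    (norm_smul_le : ∀ (r : ℝ) (a : K), ‖r • a‖ ≤ |r| * ‖a‖)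
    (star : K →ₗ[ℝ] K)
    (star_star : ∀ a : K, star (star a) = a)
    (star_mul : ∀ a b : K, star (a * b) = star b * star a)
    (real_cond : ∀ a : K, ∃ r : ℝ, a + star a = r • (1 : K))
    (alt_left : ∀ a b : K, (a * a) * b = a * (a * b))
    (alt_right : ∀ a b : K, (a * b) * b = a * (b * b))
    (mul_star_self : ∀ a : K, a * star a = (‖a‖ ^ 2 : ℝ) • (1 : K))
    (star_mul_self : ∀ a : K, star a * a = (‖a‖ ^ 2 : ℝ) • (1 : K))
    (ψ : Fin 2 → K) :
    let M : Matrix (Fin 2) (Fin 2) K := Matrix.of fun i j => ψ i * star (ψ j)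
    let Mt : Matrix (Fin 2) (Fin 2) K :=
      M - (Matrix.trace M) • (1 : Matrix (Fin 2) (Fin 2) K)
    Mt.mulVec ψ = 0 := by
  intro M Mt
  -- key lemma: (x * star b) * b = ‖b‖² • x
  have key : ∀ x b : K, (x * star b) * b = (‖b‖ ^ 2 : ℝ) • x := by
    intro x b
    obtain ⟨r, hr⟩ := real_cond b
    have hsb : star b = r • (1 : K) - b := by
      rw [eq_sub_iff_add_eq, add_comm]; exact hr
    have h1 : x * star b = r • x - x * b := by
      rw [hsb, mul_sub, mul_smul_comm, mul_one]
    have h2 : (‖b‖ ^ 2 : ℝ) • x = x * (star b * b) := by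
      rw [star_mul_self, mul_smul_comm, mul_one]
    rw [h1, h2, hsb, sub_mul, sub_mul, smul_mul_assoc, smul_mul_assoc,
      one_mul, mul_sub, mul_smul_comm, alt_right]
  have key2 : ∀ x b : K, (b * star b) * x = (‖b‖ ^ 2 : ℝ) • x := by
    intro x b
    rw [mul_star_self, smul_mul_assoc, one_mul]
  funext i
  simp only [Mt, M, Matrix.mulVec, dotProduct, Matrix.sub_apply,
    Matrix.smul_apply, Matrix.trace, Matrix.diag, Matrix.of_apply,
    Matrix.one_apply, Fin.sum_univ_two, Pi.zero_apply, smul_eq_mul]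
  fin_cases i <;>
    simp only [Fin.isValue, if_true, if_false, Fin.zero_eta, Fin.mk_one,
      one_ne_zero, zero_ne_one, ite_true, ite_false, mul_one, mul_zero,
      smul_zero, smul_eq_mul] <;>
    simp only [sub_zero, sub_mul, add_mul, key, key2] <;>
    abel
end

section
/- Let K be a unital, not necessarily associative, real algebra with conjugation satisfying the reality condition, alternative, with a norm satisfying the conjugation-norm law. Then for every ψ : Fin 2 → K and every index i, ∑ j, (ψ i * star (ψ j)) * ψ j = ((‖ψ 0‖^2 + ‖ψ 1‖^2) : ℝ) • ψ i; that is, (ψ ψ†) ψ = (ψ† ψ) ψ. -/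
/-- `(ψ ψ†) ψ = (ψ† ψ) ψ`: for each index `i`,
`∑ j, (ψ i * star (ψ j)) * ψ j = (‖ψ 0‖² + ‖ψ 1‖²) • ψ i`. -/
theorem psi_psi_dagger_psi {K : Type*} [NonAssocRing K] [Module ℝ K]
    [SMulCommClass ℝ K K] [IsScalarTower ℝ K K] [Norm K]
    (norm_eq_zero : ∀ a : K, ‖a‖ = 0 ↔ a = 0)
    (norm_add_le : ∀ a b : K, ‖a + b‖ ≤ ‖a‖ + ‖b‖)
    (norm_neg : ∀ a : K, ‖-a‖ = ‖a‖)
    (norm_smul_le : ∀ (r : ℝ) (a : K), ‖r • a‖ ≤ |r| * ‖a‖)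
    (star : K →ₗ[ℝ] K)
    (star_star : ∀ a : K, star (star a) = a)
    (star_mul : ∀ a b : K, star (a * b) = star b * star a)
    (real_cond : ∀ a : K, ∃ r : ℝ, a + star a = r • (1 : K))
    (alt_left : ∀ a b : K, (a * a) * b = a * (a * b))
    (alt_right : ∀ a b : K, (a * b) * b = a * (b * b))
    (mul_star_self : ∀ a : K, a * star a = (‖a‖ ^ 2 : ℝ) • (1 : K))
    (star_mul_self : ∀ a : K, star a * a = (‖a‖ ^ 2 : ℝ) • (1 : K))
    (ψ : Fin 2 → K) (i : Fin 2) :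
    ∑ j, (ψ i * star (ψ j)) * ψ j = ((‖ψ 0‖ ^ 2 + ‖ψ 1‖ ^ 2 : ℝ)) • ψ i := by
  have key : ∀ a b : K, (a * star b) * b = (‖b‖ ^ 2 : ℝ) • a := by
    intro a b
    obtain ⟨r, hr⟩ := real_cond b
    have hsb : star b = r • (1 : K) - b := by linear_combination (norm := module) hr
    calc (a * star b) * b = (a * (r • (1 : K) - b)) * b := by rw [hsb]
      _ = (r • a - a * b) * b := by
          rw [mul_sub, mul_smul_comm, mul_one]
      _ = r • (a * b) - a * (b * b) := by
          rw [sub_mul, smul_mul_assoc, alt_right]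
      _ = a * ((r • (1 : K) - b) * b) := by
          rw [sub_mul, smul_mul_assoc, one_mul, mul_sub, mul_smul_comm]
      _ = a * (star b * b) := by rw [hsb]
      _ = (‖b‖ ^ 2 : ℝ) • a := by rw [star_mul_self, mul_smul_comm, mul_one]
  rw [Fin.sum_univ_two, key, key, add_smul]
end

section
/- Polarized 3-ψ's rule: let K be a unital, not necessarily associative, real algebra with conjugation satisfying the reality condition, alternative, with a norm satisfying the conjugation-norm law. For ψ, φ : Fin 2 → K define D(ψ,φ) := N(ψ,φ) − (Matrix.trace N(ψ,φ)) • 1, where N(ψ,φ) i j := ψ i * star (φ j) + φ i * star (ψ j). Then the completely symmetric trilinear map T vanishes: for all ψ, φ, χ : Fin 2 → K, D(ψ,φ).mulVec χ + D(φ,χ).mulVec ψ + D(χ,ψ).mulVec φ = 0. -/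
/-- The polarized 3-ψ's rule: the completely symmetric trilinear map
`T(ψ,φ,χ) = (ψ·φ)χ + (φ·χ)ψ + (χ·ψ)φ` vanishes. -/
theorem polarized_three_psis_rule {K : Type*} [NonAssocRing K] [Module ℝ K]
    [SMulCommClass ℝ K K] [IsScalarTower ℝ K K] [Norm K]
    (norm_eq_zero : ∀ a : K, ‖a‖ = 0 ↔ a = 0)
    (norm_add_le : ∀ a b : K, ‖a + b‖ ≤ ‖a‖ + ‖b‖)
    (norm_neg : ∀ a : K, ‖-a‖ = ‖a‖)
    (norm_smul_le : ∀ (r : ℝ) (a : K), ‖r • a‖ ≤ |r| * ‖a‖)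
    (star : K →ₗ[ℝ] K)
    (star_star : ∀ a : K, star (star a) = a)
    (star_mul : ∀ a b : K, star (a * b) = star b * star a)
    (real_cond : ∀ a : K, ∃ r : ℝ, a + star a = r • (1 : K))
    (alt_left : ∀ a b : K, (a * a) * b = a * (a * b))
    (alt_right : ∀ a b : K, (a * b) * b = a * (b * b))
    (mul_star_self : ∀ a : K, a * star a = (‖a‖ ^ 2 : ℝ) • (1 : K))
    (star_mul_self : ∀ a : K, star a * a = (‖a‖ ^ 2 : ℝ) • (1 : K))
    (ψ φ χ : Fin 2 → K) :
    let N : (Fin 2 → K) → (Fin 2 → K) → Matrix (Fin 2) (Fin 2) K :=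
      fun ψ φ => Matrix.of fun i j => ψ i * star (φ j) + φ i * star (ψ j)
    let D : (Fin 2 → K) → (Fin 2 → K) → Matrix (Fin 2) (Fin 2) K :=
      fun ψ φ => N ψ φ - (Matrix.trace (N ψ φ)) • (1 : Matrix (Fin 2) (Fin 2) K)
    (D ψ φ).mulVec χ + (D φ χ).mulVec ψ + (D χ ψ).mulVec φ = 0 := by
  -- linearized right alternative law
  have l2 : ∀ a u v : K, (a * u) * v + (a * v) * u = a * (u * v) + a * (v * u) := by
    intro a u v
    have h := alt_right a (u + v)
    simp only [mul_add, add_mul] at h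
    rw [alt_right a u, alt_right a v] at h
    rw [← sub_eq_zero] at h ⊢
    rw [← h]
    abel
  -- polarized norm conditions: both symmetrized products are the same real scalar
  have pol : ∀ y z : K, ∃ s : ℝ, y * star z + z * star y = s • (1 : K) ∧
      star y * z + star z * y = s • (1 : K) := by
    intro y z
    refine ⟨‖y + z‖ ^ 2 - ‖y‖ ^ 2 - ‖z‖ ^ 2, ?_, ?_⟩
    · calc y * star z + z * star y
          = (y + z) * star (y + z) - y * star y - z * star z := by
            rw [map_add]; simp only [mul_add, add_mul]; abel
        _ = (‖y + z‖ ^ 2 : ℝ) • (1 : K) - (‖y‖ ^ 2 : ℝ) • (1 : K)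
            - (‖z‖ ^ 2 : ℝ) • (1 : K) := by
            rw [mul_star_self, mul_star_self, mul_star_self]
        _ = (‖y + z‖ ^ 2 - ‖y‖ ^ 2 - ‖z‖ ^ 2 : ℝ) • (1 : K) := by
            rw [sub_smul, sub_smul]
    · calc star y * z + star z * y
          = star (y + z) * (y + z) - star y * y - star z * z := by
            rw [map_add]; simp only [mul_add, add_mul]; abel
        _ = (‖y + z‖ ^ 2 : ℝ) • (1 : K) - (‖y‖ ^ 2 : ℝ) • (1 : K)
            - (‖z‖ ^ 2 : ℝ) • (1 : K) := by
            rw [star_mul_self, star_mul_self, star_mul_self]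
        _ = (‖y + z‖ ^ 2 - ‖y‖ ^ 2 - ‖z‖ ^ 2 : ℝ) • (1 : K) := by
            rw [sub_smul, sub_smul]
  -- key lemma A
  have lemA : ∀ a y z : K, (a * star y) * z + (a * star z) * y
      = a * (star y * z) + a * (star z * y) := by
    intro a y z
    obtain ⟨r1, hy⟩ := real_cond y
    obtain ⟨r2, hz⟩ := real_cond z
    have hy' : star y = r1 • (1 : K) - y := by rw [← hy]; abel
    have hz' : star z = r2 • (1 : K) - z := by rw [← hz]; abel
    rw [hy', hz']
    simp only [mul_sub, sub_mul, mul_smul_comm, smul_mul_assoc, mul_one, one_mul]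
    have h := (l2 a y z).symm
    rw [← sub_eq_zero] at h ⊢
    rw [← h]
    abel
  -- key lemma B
  have keyB : ∀ a y z : K, (a * star y) * z + (a * star z) * y
      = (y * star z) * a + (z * star y) * a := by
    intro a y z
    obtain ⟨s, hs1, hs2⟩ := pol y z
    calc (a * star y) * z + (a * star z) * y
        = a * (star y * z) + a * (star z * y) := lemA a y z
      _ = a * (star y * z + star z * y) := (mul_add a _ _).symm
      _ = a * (s • (1 : K)) := by rw [hs2]
      _ = s • (a * 1) := (mul_smul_comm s a 1)
      _ = s • ((1 : K) * a) := by rw [mul_one, one_mul]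
      _ = (s • (1 : K)) * a := (smul_mul_assoc s 1 a).symm
      _ = (y * star z + z * star y) * a := by rw [hs1]
      _ = (y * star z) * a + (z * star y) * a := add_mul _ _ _
  intro N D
  funext i
  fin_cases i
  · simp only [N, D, Pi.add_apply, Pi.zero_apply, Matrix.mulVec, dotProduct,
      Fin.sum_univ_two, Matrix.sub_apply, Matrix.smul_apply, Matrix.of_apply,
      Matrix.one_apply, Matrix.trace, Matrix.diag, Finset.sum_apply, smul_eq_mul,
      sub_mul, add_mul, mul_one, mul_zero, zero_mul, Fin.zero_eta, Fin.mk_one,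
      Fin.isValue, if_true, one_ne_zero, zero_ne_one, if_false, reduceIte, add_zero, sub_zero]
    have hA := keyB (ψ 0) (φ 1) (χ 1)
    have hB := keyB (φ 0) (χ 1) (ψ 1)
    have hC := keyB (χ 0) (ψ 1) (φ 1)
    have h0 := sub_eq_zero.mpr (congrArg₂ (· + ·) hA (congrArg₂ (· + ·) hB hC))
    rw [← h0]
    abel
  · simp only [N, D, Pi.add_apply, Pi.zero_apply, Matrix.mulVec, dotProduct,
      Fin.sum_univ_two, Matrix.sub_apply, Matrix.smul_apply, Matrix.of_apply,
      Matrix.one_apply, Matrix.trace, Matrix.diag, Finset.sum_apply, smul_eq_mul,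
      sub_mul, add_mul, mul_one, mul_zero, zero_mul, Fin.zero_eta, Fin.mk_one,
      Fin.isValue, if_true, one_ne_zero, zero_ne_one, if_false, reduceIte, add_zero, sub_zero]
    have hA := keyB (ψ 1) (φ 0) (χ 0)
    have hB := keyB (φ 1) (χ 0) (ψ 0)
    have hC := keyB (χ 1) (ψ 0) (φ 0)
    have h0 := sub_eq_zero.mpr (congrArg₂ (· + ·) hA (congrArg₂ (· + ·) hB hC))
    rw [← h0]
    abel
end

section
/- Let K be a unital, not necessarily associative, real algebra with conjugation satisfying the reality condition, and suppose K is alternative. Then for all ε, ψ, φ, χ : Fin 2 → K, ⟨ψ, (ε·φ)χ⟩ = ⟨ε, (ψ·χ)φ⟩; explicitly, P(ψ, D(ε,φ).mulVec χ) + star(P(ψ, D(ε,φ).mulVec χ)) = P(ε, D(ψ,χ).mulVec φ) + star(P(ε, D(ψ,χ).mulVec φ)), where P(ψ,φ) := ∑ i, star (ψ i) * φ i, N(ψ,φ) i j := ψ i * star (φ j) + φ i * star (ψ j), and D(ψ,φ) := N(ψ,φ) − (Matrix.trace N(ψ,φ)) • 1. -/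
set_option linter.unusedSectionVars false

section PairingAux

variable {K : Type*} [NonAssocRing K] [Module ℝ K]
    [SMulCommClass ℝ K K] [IsScalarTower ℝ K K]

private lemma psi_lin_left (alt_left : ∀ a b : K, (a * a) * b = a * (a * b))
    (x y z : K) : (x*y)*z + (y*x)*z = x*(y*z) + y*(x*z) := by
  have h := alt_left (x + y) z
  simp only [add_mul, mul_add] at h
  rw [alt_left, alt_left] at h
  linear_combination (norm := abel) h

private lemma psi_lin_right (alt_right : ∀ a b : K, (a * b) * b = a * (b * b))
    (x y z : K) : (x*y)*z + (x*z)*y = x*(y*z) + x*(z*y) := by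
  have h := alt_right x (y + z)
  simp only [add_mul, mul_add] at h
  rw [alt_right, alt_right] at h
  linear_combination (norm := abel) h

private lemma psi_assoc_anti (alt_left : ∀ a b : K, (a * a) * b = a * (a * b))
    (alt_right : ∀ a b : K, (a * b) * b = a * (b * b))
    (x y z : K) : (x*y)*z + (z*y)*x = x*(y*z) + z*(y*x) := by
  linear_combination (norm := abel)
    psi_lin_left alt_left x y z - psi_lin_right alt_right y x z
      + psi_lin_left alt_left y z x

private lemma psi_star_eq (star : K →ₗ[ℝ] K)
    (real_cond : ∀ a : K, ∃ r : ℝ, a + star a = r • (1 : K)) (x : K) :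
    ∃ r : ℝ, star x = r • (1:K) - x := by
  obtain ⟨r, h⟩ := real_cond x
  exact ⟨r, by linear_combination (norm := module) h⟩

private lemma psi_assoc_star (star : K →ₗ[ℝ] K)
    (real_cond : ∀ a : K, ∃ r : ℝ, a + star a = r • (1 : K))
    (alt_left : ∀ a b : K, (a * a) * b = a * (a * b))
    (alt_right : ∀ a b : K, (a * b) * b = a * (b * b))
    (x y z : K) :
    (star z * star y) * star x - star z * (star y * star x)
      = (x*y)*z - x*(y*z) := by
  obtain ⟨rx, hx⟩ := psi_star_eq star real_cond x
  obtain ⟨ry, hy⟩ := psi_star_eq star real_cond y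
  obtain ⟨rz, hz⟩ := psi_star_eq star real_cond z
  rw [hx, hy, hz]
  have key : (z*y)*x - z*(y*x) = -((x*y)*z - x*(y*z)) := by
    linear_combination (norm := abel) psi_assoc_anti alt_left alt_right x y z
  simp only [mul_sub, sub_mul, smul_mul_assoc, mul_smul_comm, one_mul, mul_one]
  linear_combination (norm := module) -key

private lemma psi_tau_assoc (star : K →ₗ[ℝ] K)
    (star_mul : ∀ a b : K, star (a * b) = star b * star a)
    (real_cond : ∀ a : K, ∃ r : ℝ, a + star a = r • (1 : K))
    (alt_left : ∀ a b : K, (a * a) * b = a * (a * b))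
    (alt_right : ∀ a b : K, (a * b) * b = a * (b * b))
    (x y z : K) :
    (x*y)*z + star ((x*y)*z) = x*(y*z) + star (x*(y*z)) := by
  rw [star_mul, star_mul, star_mul, star_mul]
  linear_combination (norm := abel)
    -psi_assoc_star star real_cond alt_left alt_right x y z

private lemma psi_tau_comm (star : K →ₗ[ℝ] K)
    (star_mul : ∀ a b : K, star (a * b) = star b * star a)
    (real_cond : ∀ a : K, ∃ r : ℝ, a + star a = r • (1 : K))
    (x y : K) :
    x*y + star (x*y) = y*x + star (y*x) := by
  obtain ⟨rx, hx⟩ := psi_star_eq star real_cond x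
  obtain ⟨ry, hy⟩ := psi_star_eq star real_cond y
  rw [star_mul, star_mul, hx, hy]
  simp only [mul_sub, sub_mul, smul_mul_assoc, mul_smul_comm, one_mul, mul_one]
  module

private lemma psi_tau_star (star : K →ₗ[ℝ] K)
    (star_star : ∀ a : K, star (star a) = a) (x : K) :
    star x + star (star x) = x + star x := by
  rw [star_star]; exact add_comm _ _

private lemma psi_stepA (star : K →ₗ[ℝ] K)
    (star_mul : ∀ a b : K, star (a * b) = star b * star a)
    (real_cond : ∀ a : K, ∃ r : ℝ, a + star a = r • (1 : K))
    (alt_right : ∀ a b : K, (a * b) * b = a * (b * b))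
    (c d : K) :
    ∃ r s : ℝ, ∀ w : K, (w * star c)*d + (w * star d)*c = r • w - s • w := by
  obtain ⟨rc, hc⟩ := psi_star_eq star real_cond c
  obtain ⟨rd, hd⟩ := psi_star_eq star real_cond d
  obtain ⟨rcd, hcd⟩ := real_cond (c*d)
  rw [star_mul, hc, hd] at hcd
  refine ⟨rc*rd, rcd, fun w => ?_⟩
  have h1 := psi_lin_right alt_right w c d
  have hcd2 : c*d + d*c = rcd•(1:K) - (rc*rd)•(1:K) + rc•d + rd•c := by
    simp only [sub_mul, mul_sub, smul_mul_assoc, mul_smul_comm, one_mul, mul_one] at hcd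
    linear_combination (norm := module) hcd
  have hcd3 : w*(c*d) + w*(d*c) = rcd•w - (rc*rd)•w + rc•(w*d) + rd•(w*c) := by
    have h := congrArg (fun t => w * t) hcd2
    simp only [mul_add, mul_sub, mul_smul_comm, mul_one] at h
    linear_combination (norm := module) h
  rw [hc, hd]
  simp only [mul_sub, mul_smul_comm, mul_one, sub_mul, smul_mul_assoc]
  linear_combination (norm := module) - h1 - hcd3

private lemma psi_stepD (star : K →ₗ[ℝ] K)
    (star_star : ∀ a : K, star (star a) = a)
    (star_mul : ∀ a b : K, star (a * b) = star b * star a)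
    (real_cond : ∀ a : K, ∃ r : ℝ, a + star a = r • (1 : K))
    (alt_left : ∀ a b : K, (a * a) * b = a * (a * b))
    (alt_right : ∀ a b : K, (a * b) * b = a * (b * b))
    (a b c d : K) :
    star a * ((b*star d)*c) + star (star a * ((b*star d)*c))
      = star b * ((a*star c)*d) + star (star b * ((a*star c)*d)) := by
  have hstar : star ((c*star a)*(b*star d)) = (d*star b)*(a*star c) := by
    simp only [star_mul, star_star]
  calc star a * ((b*star d)*c) + star (star a * ((b*star d)*c))
      = (star a*(b*star d))*c + star ((star a*(b*star d))*c) :=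
        (psi_tau_assoc star star_mul real_cond alt_left alt_right _ _ _).symm
    _ = c*(star a*(b*star d)) + star (c*(star a*(b*star d))) :=
        psi_tau_comm star star_mul real_cond _ _
    _ = (c*star a)*(b*star d) + star ((c*star a)*(b*star d)) :=
        (psi_tau_assoc star star_mul real_cond alt_left alt_right _ _ _).symm
    _ = star ((c*star a)*(b*star d)) + star (star ((c*star a)*(b*star d))) :=
        (psi_tau_star star star_star _).symm
    _ = (d*star b)*(a*star c) + star ((d*star b)*(a*star c)) := by rw [hstar]
    _ = d*(star b*(a*star c)) + star (d*(star b*(a*star c))) :=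
        psi_tau_assoc star star_mul real_cond alt_left alt_right _ _ _
    _ = (star b*(a*star c))*d + star ((star b*(a*star c))*d) :=
        psi_tau_comm star star_mul real_cond _ _
    _ = star b*((a*star c)*d) + star (star b*((a*star c)*d)) :=
        psi_tau_assoc star star_mul real_cond alt_left alt_right _ _ _

private lemma psi_keyS1 (star : K →ₗ[ℝ] K)
    (star_star : ∀ a : K, star (star a) = a)
    (star_mul : ∀ a b : K, star (a * b) = star b * star a)
    (real_cond : ∀ a : K, ∃ r : ℝ, a + star a = r • (1 : K))
    (alt_left : ∀ a b : K, (a * a) * b = a * (a * b))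
    (alt_right : ∀ a b : K, (a * b) * b = a * (b * b))
    (a b c d : K) :
    star a * ((b * star c)*d) + star (star a * ((b * star c)*d))
      = star d * ((c * star b)*a) + star (star d * ((c * star b)*a)) := by
  have hstar : star (star a * ((b*star c)*d)) = (star d*(c*star b))*a := by
    simp only [star_mul, star_star]
  calc star a * ((b*star c)*d) + star (star a * ((b*star c)*d))
      = star (star a * ((b*star c)*d)) + star (star (star a * ((b*star c)*d))) :=
        (psi_tau_star star star_star _).symm
    _ = (star d*(c*star b))*a + star ((star d*(c*star b))*a) := by rw [hstar]
    _ = star d*((c*star b)*a) + star (star d*((c*star b)*a)) :=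
        psi_tau_assoc star star_mul real_cond alt_left alt_right _ _ _

private lemma psi_keyS2 (star : K →ₗ[ℝ] K)
    (star_star : ∀ a : K, star (star a) = a)
    (star_mul : ∀ a b : K, star (a * b) = star b * star a)
    (real_cond : ∀ a : K, ∃ r : ℝ, a + star a = r • (1 : K))
    (alt_left : ∀ a b : K, (a * a) * b = a * (a * b))
    (alt_right : ∀ a b : K, (a * b) * b = a * (b * b))
    (a b c d : K) :
    star a * ((b * star c)*d) + star (star a * ((b * star c)*d))
      = star b * ((a * star d)*c) + star (star b * ((a * star d)*c)) := by
  obtain ⟨r, s, hA⟩ := psi_stepA star star_mul real_cond alt_right c d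
  have h1 : star a * ((b*star c)*d) + star a * ((b*star d)*c)
      = r • (star a * b) - s • (star a * b) := by
    have h := congrArg (fun t => star a * t) (hA b)
    simp only [mul_add, mul_sub, mul_smul_comm] at h
    linear_combination (norm := module) h
  have h2 : star b * ((a*star c)*d) + star b * ((a*star d)*c)
      = r • (star b * a) - s • (star b * a) := by
    have h := congrArg (fun t => star b * t) (hA a)
    simp only [mul_add, mul_sub, mul_smul_comm] at h
    linear_combination (norm := module) h
  have h1s := congrArg star h1
  have h2s := congrArg star h2
  simp only [map_add, map_sub, map_smul] at h1s h2s
  have hPQ : star a * b + star (star a * b) = star b * a + star (star b * a) := by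
    rw [star_mul, star_mul, star_star, star_star]; exact add_comm _ _
  have hD := psi_stepD star star_star star_mul real_cond alt_left alt_right a b c d
  linear_combination (norm := module) h1 + h1s - h2 - h2s - hD + r • hPQ - s • hPQ

end PairingAux

/-- `⟨ψ, (ε·φ)χ⟩ = ⟨ε, (ψ·χ)φ⟩`, with each side doubled via `x + star x`. -/
theorem pairing_swap_identity {K : Type*} [NonAssocRing K] [Module ℝ K]
    [SMulCommClass ℝ K K] [IsScalarTower ℝ K K]
    (star : K →ₗ[ℝ] K)
    (star_star : ∀ a : K, star (star a) = a)
    (star_mul : ∀ a b : K, star (a * b) = star b * star a)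
    (real_cond : ∀ a : K, ∃ r : ℝ, a + star a = r • (1 : K))
    (alt_left : ∀ a b : K, (a * a) * b = a * (a * b))
    (alt_right : ∀ a b : K, (a * b) * b = a * (b * b))
    (ε ψ φ χ : Fin 2 → K) :
    let P : (Fin 2 → K) → (Fin 2 → K) → K := fun ψ φ => ∑ i, star (ψ i) * φ i
    let N : (Fin 2 → K) → (Fin 2 → K) → Matrix (Fin 2) (Fin 2) K :=
      fun ψ φ => Matrix.of fun i j => ψ i * star (φ j) + φ i * star (ψ j)
    let D : (Fin 2 → K) → (Fin 2 → K) → Matrix (Fin 2) (Fin 2) K :=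
      fun ψ φ => N ψ φ - (Matrix.trace (N ψ φ)) • (1 : Matrix (Fin 2) (Fin 2) K)
    P ψ ((D ε φ).mulVec χ) + star (P ψ ((D ε φ).mulVec χ)) =
      P ε ((D ψ χ).mulVec φ) + star (P ε ((D ψ χ).mulVec φ)) := by
  intro P N D
  simp only [P, N, D, Matrix.mulVec, dotProduct, Fin.sum_univ_two,
    Matrix.sub_apply, Matrix.smul_apply, Matrix.one_apply, Matrix.of_apply,
    Matrix.trace_fin_two, smul_eq_mul, if_true, if_false]
  simp only [show ((0:Fin 2) = 1) = False from by simp, show ((1:Fin 2) = 0) = False from by simp,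
    if_false, mul_zero, sub_zero, mul_one]
  have keyS3 : ∀ a b c d : K,
      star a * ((b * star c)*d) + star (star a * ((b * star c)*d))
        = star c * ((d * star a)*b) + star (star c * ((d * star a)*b)) :=
    fun a b c d =>
      (psi_keyS1 star star_star star_mul real_cond alt_left alt_right a b c d).trans
        (psi_keyS2 star star_star star_mul real_cond alt_left alt_right d c b a)
  have k2 := psi_keyS2 star star_star star_mul real_cond alt_left alt_right
  linear_combination (norm := (simp only [map_add, map_sub, mul_add, add_mul, mul_sub, sub_mul, mul_one]; abel))
    k2 (ψ 0) (ε 0) (φ 1) (χ 1) + keyS3 (ψ 0) (φ 0) (ε 1) (χ 1)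
      + k2 (ψ 1) (ε 1) (φ 0) (χ 0) + keyS3 (ψ 1) (φ 1) (ε 0) (χ 0)
      - k2 (ψ 0) (ε 1) (φ 1) (χ 0) - keyS3 (ψ 0) (φ 1) (ε 1) (χ 0)
      - k2 (ψ 1) (ε 0) (φ 0) (χ 1) - keyS3 (ψ 1) (φ 0) (ε 0) (χ 1)
end

section
/- Vanishing of the supersymmetry obstruction: let K be a unital, not necessarily associative, real algebra with conjugation satisfying the reality condition, alternative, with a norm satisfying the conjugation-norm law. Then the totally symmetric part of ⟨ψ, (ε·φ)χ⟩ vanishes: for all ε, ψ, φ, χ : Fin 2 → K, the element P(ψ, D(ε,φ).mulVec χ) + P(φ, D(ε,χ).mulVec ψ) + P(χ, D(ε,ψ).mulVec φ) plus the star of this sum equals 0, where P(ψ,φ) := ∑ i, star (ψ i) * φ i, N(ψ,φ) i j := ψ i * star (φ j) + φ i * star (ψ j), and D(ψ,φ) := N(ψ,φ) − (Matrix.trace N(ψ,φ)) • 1. -/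
theorem polar3 {V K : Type*} [AddCommGroup V] [AddCommGroup K] [Module ℝ K]
    (f : V → V → V → K)
    (h1 : ∀ x x' y z, f (x + x') y z = f x y z + f x' y z)
    (h2 : ∀ x y y' z, f x (y + y') z = f x y z + f x y' z)
    (h3 : ∀ x y z z', f x y (z + z') = f x y z + f x y z')
    (hswap : ∀ x y z, f x y z = f z y x)
    (hdiag : ∀ x, f x x x = 0)
    (x y z : V) : f x y z + f y z x + f z x y = 0 := by
  have pair : ∀ u v : V,
      f u u v + f u v u + f v u u + (f v v u + f v u v + f u v v) = 0 := by
    intro u v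
    have h := hdiag (u + v)
    simp only [h1, h2, h3, hdiag, zero_add, add_zero] at h
    rw [← h]; abel
  have h27 := hdiag (x + y + z)
  simp only [h1, h2, h3, hdiag, zero_add, add_zero] at h27
  have hxy := neg_eq_zero.mpr (pair x y)
  have hxz := neg_eq_zero.mpr (pair x z)
  have hyz := neg_eq_zero.mpr (pair y z)
  have h6 : f x y z + f x z y + f y x z + f y z x + f z x y + f z y x = 0 := by
    conv_rhs => rw [← h27]
    rw [← sub_eq_zero]
    conv_rhs => rw [← hxy]
    rw [← sub_eq_zero]
    conv_rhs => rw [← hxz]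
    rw [← sub_eq_zero]
    conv_rhs => rw [← hyz]
    abel
  have h2' : (f x y z + f y z x + f z x y) + (f x y z + f y z x + f z x y) = 0 := by
    rw [← h6, hswap x z y, hswap y x z, hswap z y x]; abel
  have h2'' : (2:ℝ) • (f x y z + f y z x + f z x y) = 0 := by
    rw [two_smul]; exact h2'
  calc f x y z + f y z x + f z x y
      = (2:ℝ)⁻¹ • ((2:ℝ) • (f x y z + f y z x + f z x y)) := by
        rw [smul_smul]; norm_num
    _ = 0 := by rw [h2'', smul_zero]

set_option maxHeartbeats 2000000 in
/-- Vanishing of the supersymmetry obstruction: the totally symmetric part of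
`⟨ψ, (ε·φ)χ⟩` vanishes. -/
theorem susy_obstruction_vanishes {K : Type*} [NonAssocRing K] [Module ℝ K]
    [SMulCommClass ℝ K K] [IsScalarTower ℝ K K] [Norm K]
    (norm_eq_zero : ∀ a : K, ‖a‖ = 0 ↔ a = 0)
    (norm_add_le : ∀ a b : K, ‖a + b‖ ≤ ‖a‖ + ‖b‖)
    (norm_neg : ∀ a : K, ‖-a‖ = ‖a‖)
    (norm_smul_le : ∀ (r : ℝ) (a : K), ‖r • a‖ ≤ |r| * ‖a‖)
    (star : K →ₗ[ℝ] K)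
    (star_star : ∀ a : K, star (star a) = a)
    (star_mul : ∀ a b : K, star (a * b) = star b * star a)
    (real_cond : ∀ a : K, ∃ r : ℝ, a + star a = r • (1 : K))
    (alt_left : ∀ a b : K, (a * a) * b = a * (a * b))
    (alt_right : ∀ a b : K, (a * b) * b = a * (b * b))
    (mul_star_self : ∀ a : K, a * star a = (‖a‖ ^ 2 : ℝ) • (1 : K))
    (star_mul_self : ∀ a : K, star a * a = (‖a‖ ^ 2 : ℝ) • (1 : K))
    (ε ψ φ χ : Fin 2 → K) :
    let P : (Fin 2 → K) → (Fin 2 → K) → K := fun ψ φ => ∑ i, star (ψ i) * φ i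
    let N : (Fin 2 → K) → (Fin 2 → K) → Matrix (Fin 2) (Fin 2) K :=
      fun ψ φ => Matrix.of fun i j => ψ i * star (φ j) + φ i * star (ψ j)
    let D : (Fin 2 → K) → (Fin 2 → K) → Matrix (Fin 2) (Fin 2) K :=
      fun ψ φ => N ψ φ - (Matrix.trace (N ψ φ)) • (1 : Matrix (Fin 2) (Fin 2) K)
    let S : K := P ψ ((D ε φ).mulVec χ) + P φ ((D ε χ).mulVec ψ) +
      P χ ((D ε ψ).mulVec φ)
    S + star S = 0 := by
  intro P N D S
  have hP : P = fun ψ φ => ∑ i, star (ψ i) * φ i := rfl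
  have hN : N = fun ψ φ => Matrix.of fun i j => ψ i * star (φ j) + φ i * star (ψ j) := rfl
  have hD : D = fun ψ φ => N ψ φ - (Matrix.trace (N ψ φ)) • (1 : Matrix (Fin 2) (Fin 2) K) := rfl
  have hS : S = P ψ ((D ε φ).mulVec χ) + P φ ((D ε χ).mulVec ψ) +
      P χ ((D ε ψ).mulVec φ) := rfl
  -- conjugation as scalar reflection
  have hconj : ∀ x : K, ∃ r : ℝ, star x = r • (1 : K) - x := by
    intro x
    obtain ⟨r, hr⟩ := real_cond x
    exact ⟨r, by rw [← hr]; abel⟩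
  -- alternative laws with a conjugate
  have K1 : ∀ x y : K, star x * (x * y) = (star x * x) * y := by
    intro x y
    obtain ⟨r, hr⟩ := hconj x
    rw [hr]
    simp only [sub_mul, smul_mul_assoc, one_mul, alt_left]
  have K3 : ∀ x y : K, (y * star x) * x = y * (star x * x) := by
    intro x y
    obtain ⟨r, hr⟩ := hconj x
    rw [hr]
    simp only [mul_sub, sub_mul, smul_mul_assoc, mul_smul_comm, one_mul, mul_one, alt_right]
  -- real part of a product is symmetric
  have K5 : ∀ x y : K, x * y + star (x * y) = y * x + star (y * x) := by
    intro x y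
    obtain ⟨r, hr⟩ := hconj x
    obtain ⟨s, hs⟩ := hconj y
    rw [star_mul, star_mul, hr, hs]
    simp only [sub_mul, mul_sub, smul_mul_assoc, mul_smul_comm, one_mul, mul_one, smul_smul]
    module
  -- antisymmetry of the associator
  have A12 : ∀ x y z : K, (x*y)*z - x*(y*z) = -((y*x)*z - y*(x*z)) := by
    intro x y z
    have h := alt_left (x + y) z
    simp only [add_mul, mul_add] at h
    rw [alt_left x z, alt_left y z] at h
    rw [← sub_eq_zero] at h
    rw [← sub_eq_zero]
    conv_rhs => rw [← h]
    abel
  have A23 : ∀ x y z : K, (x*y)*z - x*(y*z) = -((x*z)*y - x*(z*y)) := by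
    intro x y z
    have h := alt_right x (y + z)
    simp only [add_mul, mul_add] at h
    rw [alt_right x y, alt_right x z] at h
    rw [← sub_eq_zero] at h
    rw [← sub_eq_zero]
    conv_rhs => rw [← h]
    abel
  have Acyc : ∀ x y z : K, (x*y)*z - x*(y*z) = (y*z)*x - y*(z*x) := by
    intro x y z
    rw [A12 y z x, A23 z y x, A12 z x y, A23 x z y]
    abel
  -- the real part of the associator vanishes
  have hA : ∀ x y z : K, ((x*y)*z - x*(y*z)) + star ((x*y)*z - x*(y*z)) = 0 := by
    intro x y z
    have d1 := K5 z (x*y)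
    have d2 := K5 (y*z) x
    have d3 := K5 (z*x) y
    have c1 := Acyc z x y
    have c2 := (Acyc y z x).trans (Acyc z x y)
    have c1s : star ((z*x)*y) - star (z*(x*y)) = star ((x*y)*z) - star (x*(y*z)) := by
      have := congrArg star c1
      rw [map_sub, map_sub] at this
      exact this
    have c2s : star ((y*z)*x) - star (y*(z*x)) = star ((x*y)*z) - star (x*(y*z)) := by
      have := congrArg star c2
      rw [map_sub, map_sub] at this
      exact this
    have z1 := neg_eq_zero.mpr (sub_eq_zero_of_eq d1)
    have z2 := sub_eq_zero_of_eq d2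
    have z3 := sub_eq_zero_of_eq d3
    have z4 := neg_eq_zero.mpr (sub_eq_zero_of_eq c1)
    have z5 := neg_eq_zero.mpr (sub_eq_zero_of_eq c2)
    have z6 := neg_eq_zero.mpr (sub_eq_zero_of_eq c1s)
    have z7 := neg_eq_zero.mpr (sub_eq_zero_of_eq c2s)
    have h3R : (((x*y)*z - x*(y*z)) + star ((x*y)*z - x*(y*z)))
        + ((((x*y)*z - x*(y*z)) + star ((x*y)*z - x*(y*z)))
        + (((x*y)*z - x*(y*z)) + star ((x*y)*z - x*(y*z)))) = 0 := by
      simp only [map_sub]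
      conv_rhs => rw [← z1]
      rw [← sub_eq_zero]
      conv_rhs => rw [← z2]
      rw [← sub_eq_zero]
      conv_rhs => rw [← z3]
      rw [← sub_eq_zero]
      conv_rhs => rw [← z4]
      rw [← sub_eq_zero]
      conv_rhs => rw [← z5]
      rw [← sub_eq_zero]
      conv_rhs => rw [← z6]
      rw [← sub_eq_zero]
      conv_rhs => rw [← z7]
      abel
    have h3R' : (3:ℝ) • (((x*y)*z - x*(y*z)) + star ((x*y)*z - x*(y*z))) = 0 := by
      rw [show (3:ℝ) = 1 + 1 + 1 by norm_num, add_smul, add_smul, one_smul]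
      rw [← h3R]; abel
    calc ((x*y)*z - x*(y*z)) + star ((x*y)*z - x*(y*z))
        = (3:ℝ)⁻¹ • ((3:ℝ) • (((x*y)*z - x*(y*z)) + star ((x*y)*z - x*(y*z)))) := by
          rw [smul_smul]; norm_num
      _ = 0 := by rw [h3R', smul_zero]
  -- real part is associative
  have K6 : ∀ x y z : K, (x*y)*z + star ((x*y)*z) = x*(y*z) + star (x*(y*z)) := by
    intro x y z
    have h := hA x y z
    rw [map_sub] at h
    rw [← sub_eq_zero]
    conv_rhs => rw [← h]
    abel
  -- the core swap identity
  have swap_core : ∀ u v d : K, star u * (d * v) + star (star u * (d * v)) =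
      star v * (star d * u) + star (star v * (star d * u)) := by
    intro u v d
    rw [(K6 (star u) d v).symm]
    have e1 : star ((star u * d) * v) = star v * (star d * u) := by
      rw [star_mul, star_mul, star_star]
    have e2 : ∀ w : K, w + star w = star w + star (star w) := fun w => by
      rw [star_star]; abel
    rw [e2 ((star u * d) * v), e1]
  -- the core cubic identity
  have star8 : ∀ a b e : K,
      (star a * ((e * star b) * b) + star (star a * ((e * star b) * b))) +
      (star b * ((b * star e) * a) + star (star b * ((b * star e) * a))) =
      (star b * ((e * star a) * b) + star (star b * ((e * star a) * b))) +
      (star b * ((a * star e) * b) + star (star b * ((a * star e) * b))) := by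
    intro a b e
    have t1 : star a * ((e * star b) * b) + star (star a * ((e * star b) * b))
        = (‖b‖^2 : ℝ) • (star a * e + star (star a * e)) := by
      rw [K3 b e, star_mul_self b, mul_smul_comm, mul_one, mul_smul_comm, map_smul, ← smul_add]
    have t2 : star b * ((b * star e) * a) + star (star b * ((b * star e) * a))
        = (‖b‖^2 : ℝ) • (star e * a + star (star e * a)) := by
      rw [← K6 (star b) (b * star e) a, K1 b (star e), star_mul_self b,
        smul_mul_assoc, one_mul, smul_mul_assoc, map_smul, ← smul_add]
    have t3 : star b * ((e * star a) * b) + star (star b * ((e * star a) * b))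
        = (‖b‖^2 : ℝ) • (e * star a + star (e * star a)) := by
      rw [K5 (star b) ((e * star a) * b), K6 (e * star a) b (star b), mul_star_self b,
        mul_smul_comm, mul_one, map_smul, ← smul_add]
    have t4 : star b * ((a * star e) * b) + star (star b * ((a * star e) * b))
        = (‖b‖^2 : ℝ) • (a * star e + star (a * star e)) := by
      rw [K5 (star b) ((a * star e) * b), K6 (a * star e) b (star b), mul_star_self b,
        mul_smul_comm, mul_one, map_smul, ← smul_add]
    rw [t1, t2, t3, t4, K5 (star a) e, K5 (star e) a]
  -- matrix entry lemmas
  have hNe : ∀ q (i j : Fin 2), N ε q i j = ε i * star (q j) + q i * star (ε j) :=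
    fun q i j => rfl
  have htr : ∀ q, Matrix.trace (N ε q) = N ε q 0 0 + N ε q 1 1 := by
    intro q
    simp [Matrix.trace, Matrix.diag, Fin.sum_univ_two]
  have hD00 : ∀ q, D ε q 0 0 = -(N ε q 1 1) := by
    intro q
    simp only [hD, Matrix.sub_apply, Matrix.smul_apply, Matrix.one_apply_eq, smul_eq_mul,
      mul_one, htr]
    abel
  have hD11 : ∀ q, D ε q 1 1 = -(N ε q 0 0) := by
    intro q
    simp only [hD, Matrix.sub_apply, Matrix.smul_apply, Matrix.one_apply_eq, smul_eq_mul,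
      mul_one, htr]
    abel
  have hD01 : ∀ q, D ε q 0 1 = N ε q 0 1 := by
    intro q
    simp only [hD, Matrix.sub_apply, Matrix.smul_apply,
      Matrix.one_apply_ne (by decide : (0 : Fin 2) ≠ 1), smul_eq_mul, mul_zero, sub_zero]
  have hD10 : ∀ q, D ε q 1 0 = N ε q 1 0 := by
    intro q
    simp only [hD, Matrix.sub_apply, Matrix.smul_apply,
      Matrix.one_apply_ne (by decide : (1 : Fin 2) ≠ 0), smul_eq_mul, mul_zero, sub_zero]
  have hNstar : ∀ q (i j : Fin 2), star (N ε q i j) = N ε q j i := by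
    intro q i j
    rw [hNe, hNe, map_add, star_mul, star_mul, star_star, star_star]
    abel
  have hDstar : ∀ q (i j : Fin 2), star (D ε q i j) = D ε q j i := by
    intro q i j
    fin_cases i <;> fin_cases j <;>
      simp only [Fin.mk_zero, Fin.mk_one, hD00, hD01, hD10, hD11, map_neg, hNstar]
  have hNadd : ∀ q q' (i j : Fin 2), N ε (q + q') i j = N ε q i j + N ε q' i j := by
    intro q q' i j
    simp only [hNe, Pi.add_apply, map_add, mul_add, add_mul]
    abel
  have hDadd : ∀ q q' (i j : Fin 2), D ε (q + q') i j = D ε q i j + D ε q' i j := by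
    intro q q' i j
    fin_cases i <;> fin_cases j <;>
      simp only [Fin.mk_zero, Fin.mk_one, hD00, hD01, hD10, hD11, hNadd] <;> abel
  -- the trilinear form
  set F : (Fin 2 → K) → (Fin 2 → K) → (Fin 2 → K) → K :=
    fun p q r => P p ((D ε q).mulVec r) + star (P p ((D ε q).mulVec r)) with hF
  have fexp : ∀ p q r, F p q r = ∑ i, ∑ j,
      (star (p i) * (D ε q i j * r j) + star (star (p i) * (D ε q i j * r j))) := by
    intro p q r
    simp only [hF, hP, Matrix.mulVec, dotProduct, Finset.mul_sum, map_sum,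
      ← Finset.sum_add_distrib]
  have h1 : ∀ p p' q r, F (p + p') q r = F p q r + F p' q r := by
    intro p p' q r
    rw [fexp, fexp, fexp, ← Finset.sum_add_distrib]
    refine Finset.sum_congr rfl fun i _ => ?_
    rw [← Finset.sum_add_distrib]
    refine Finset.sum_congr rfl fun j _ => ?_
    simp only [Pi.add_apply, map_add, add_mul]
    abel
  have h2 : ∀ p q q' r, F p (q + q') r = F p q r + F p q' r := by
    intro p q q' r
    rw [fexp, fexp, fexp, ← Finset.sum_add_distrib]
    refine Finset.sum_congr rfl fun i _ => ?_
    rw [← Finset.sum_add_distrib]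
    refine Finset.sum_congr rfl fun j _ => ?_
    simp only [hDadd, add_mul, mul_add, map_add]
    abel
  have h3 : ∀ p q r r', F p q (r + r') = F p q r + F p q r' := by
    intro p q r r'
    rw [fexp, fexp, fexp, ← Finset.sum_add_distrib]
    refine Finset.sum_congr rfl fun i _ => ?_
    rw [← Finset.sum_add_distrib]
    refine Finset.sum_congr rfl fun j _ => ?_
    simp only [Pi.add_apply, map_add, mul_add]
    abel
  have hswap : ∀ p q r, F p q r = F r q p := by
    intro p q r
    rw [fexp p q r, fexp r q p, Finset.sum_comm]
    refine Finset.sum_congr rfl fun j _ => ?_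
    refine Finset.sum_congr rfl fun i _ => ?_
    have h := swap_core (p i) (r j) (D ε q i j)
    rw [hDstar q i j] at h
    exact h
  have hdiag : ∀ p, F p p p = 0 := by
    intro p
    rw [fexp]
    simp only [Fin.sum_univ_two, hD00, hD01, hD10, hD11, hNe]
    have s1 := sub_eq_zero_of_eq (star8 (p 0) (p 1) (ε 0))
    have s2 := sub_eq_zero_of_eq (star8 (p 1) (p 0) (ε 1))
    simp only [neg_mul, mul_neg, add_mul, mul_add, map_add, map_neg, neg_add, neg_neg]
    conv_rhs => rw [← s1]
    rw [← sub_eq_zero]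
    conv_rhs => rw [← s2]
    abel
  -- assemble
  have main := polar3 F h1 h2 h3 hswap hdiag ψ φ χ
  simp only [hF] at main
  rw [hS, map_add, map_add]
  conv_rhs => rw [← main]
  abel
end
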